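/- arXiv:1212.0251 — 12 statements merged into one kernel-verified Lean document; each statement's English description precedes it below -/
import Mathlib

section
/- Let n ≥ 2 be an integer and let a, b be real numbers with a > 0 and 0 < b < 1. Set ω_k = e^{2πik/n} for k = 1, …, n−1. Then F_D^{(n−1)}(a; b, …, b; 1+a−b | ω_1, …, ω_{n−1}) = Γ(1+a−b)·Γ(1+a/n) / (Γ(1+a)·Γ(1+a/n−b)). -/
/-!
For `0 < u < 1` the numbers `1 - ζ ^ k * u`, `ζ = exp (2πi/n)`, lie in the right half-plane and
complex conjugation permutes them (`conj (ζ ^ k) = ζ ^ (n - k)`), so their arguments sum to zero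
and principal powers multiply:
`(1 - u) ^ (-b) * ∏_{k=1}^{n-1} (1 - ζ ^ k * u) ^ (-b) = (1 - u ^ n) ^ (-b)`, since
`∏_{k=0}^{n-1} (1 - ζ ^ k * u) = 1 - u ^ n`. The substitution `t = u ^ n` turns the Euler integral
into `B(a/n, 1 - b) / n`, and `Γ(1 + z) = z Γ(z)` finishes.
-/

open MeasureTheory

noncomputable def lauricellaFD (n : ℕ) (a : ℂ) (b : Fin n → ℂ) (c : ℂ) (x : Fin n → ℂ) : ℂ :=
  (Complex.Gamma c / (Complex.Gamma a * Complex.Gamma (c - a))) *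
    ∫ u in (0:ℝ)..1, (u : ℂ) ^ (a - 1) * ((1 : ℂ) - u) ^ (c - a - 1) *
      ∏ k, ((1 : ℂ) - x k * u) ^ (-(b k))

noncomputable def appellF1 (a b₁ b₂ c x₁ x₂ : ℂ) : ℂ :=
  lauricellaFD 2 a ![b₁, b₂] c ![x₁, x₂]

noncomputable def ellipticK (k : ℝ) : ℝ :=
  ∫ θ in (0:ℝ)..(Real.pi/2), (1 - k ^ 2 * Real.sin θ ^ 2) ^ (-(1:ℝ)/2)

open Complex Finset

lemma IsPrimitiveRoot.mul_prod_one_sub_pow_succ_mul {R : Type*} [CommRing R] [IsDomain R]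
    {ζ : R} {n : ℕ} (hζ : IsPrimitiveRoot ζ n) (hn : 0 < n) (z : R) :
    (1 - z) * ∏ k : Fin (n - 1), (1 - ζ ^ (k.1 + 1) * z) = 1 - z ^ n := by
  have h := congrArg (Polynomial.eval 1) (X_pow_sub_C_eq_prod hζ hn (rfl : z ^ n = z ^ n))
  simp only [Polynomial.eval_sub, Polynomial.eval_pow, Polynomial.eval_X, Polynomial.eval_C,
    Polynomial.eval_prod, one_pow] at h
  rw [h, Fin.prod_univ_eq_prod_range (fun k => 1 - ζ ^ (k + 1) * z), ← Nat.sub_add_cancel hn,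
    prod_range_succ', Nat.add_sub_cancel, pow_zero, one_mul, mul_comm]

lemma Complex.prod_cpow_of_sum_arg_mem {ι : Type*} (s : Finset ι) {w : ι → ℂ}
    (hw : ∀ i ∈ s, w i ≠ 0) (harg : ∑ i ∈ s, arg (w i) ∈ Set.Ioc (-Real.pi) Real.pi) (x : ℂ) :
    ∏ i ∈ s, w i ^ x = (∏ i ∈ s, w i) ^ x := by
  have hprod : ∏ i ∈ s, w i = exp (∑ i ∈ s, log (w i)) := by
    rw [exp_sum]; exact prod_congr rfl fun i hi => (exp_log (hw i hi)).symm
  have hlog : log (∏ i ∈ s, w i) = ∑ i ∈ s, log (w i) := by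
    rw [hprod, log_exp (by simpa [im_sum, log_im] using harg.1)
      (by simpa [im_sum, log_im] using harg.2)]
  rw [cpow_def_of_ne_zero (prod_ne_zero_iff.2 hw), hlog, sum_mul, exp_sum]
  exact prod_congr rfl fun i hi => cpow_def_of_ne_zero (hw i hi) x

lemma re_one_sub_pow_mul_pos {ζ : ℂ} {n : ℕ} (hζ : ζ ^ n = 1) (hn : n ≠ 0) (j : ℕ) {u : ℝ}
    (hu : |u| < 1) : 0 < (1 - ζ ^ j * u).re := by
  have hnorm : ‖ζ ^ j * u‖ = |u| := by
    rw [norm_mul, norm_pow, norm_eq_one_of_pow_eq_one hζ hn, one_pow, one_mul, norm_real,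
      Real.norm_eq_abs]
  rw [sub_re, one_re]
  linarith [re_le_norm (ζ ^ j * u)]

lemma sum_arg_one_sub_pow_succ_mul_eq_zero {ζ : ℂ} {n : ℕ} (hζ : ζ ^ n = 1) {u : ℝ}
    (hu : |u| < 1) : ∑ k : Fin (n - 1), arg (1 - ζ ^ (k.1 + 1) * u) = 0 := by
  rcases Nat.eq_zero_or_pos n with rfl | hn
  · simp
  have hconj : ∀ k : Fin (n - 1),
      1 - ζ ^ (k.rev.1 + 1) * u = (starRingEnd ℂ) (1 - ζ ^ (k.1 + 1) * u) := fun k => by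
    have hk : k.rev.1 + 1 + (k.1 + 1) = n := by rw [Fin.val_rev]; omega
    have hpow : ζ ^ (k.rev.1 + 1) = (ζ ^ (k.1 + 1))⁻¹ :=
      eq_inv_of_mul_eq_one_left (by rw [← pow_add, hk, hζ])
    rw [hpow, inv_eq_conj (by rw [norm_pow, norm_eq_one_of_pow_eq_one hζ hn.ne', one_pow])]
    simp
  have hneg : ∀ k : Fin (n - 1),
      arg (1 - ζ ^ (k.rev.1 + 1) * u) = -arg (1 - ζ ^ (k.1 + 1) * u) := fun k => by
    have hre := re_one_sub_pow_mul_pos hζ hn.ne' (k.1 + 1) hu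
    rw [hconj, arg_conj, if_neg (arg_lt_pi_iff.2 (.inl hre.le)).ne]
  have hsum := Equiv.sum_comp Fin.revPerm fun k : Fin (n - 1) => arg (1 - ζ ^ (k.1 + 1) * u)
  simp only [Fin.revPerm_apply, hneg, sum_neg_distrib] at hsum
  linarith

lemma IsPrimitiveRoot.one_sub_cpow_mul_prod_one_sub_pow_succ_mul_cpow {ζ : ℂ} {n : ℕ}
    (hζ : IsPrimitiveRoot ζ n) (hn : 0 < n) {u : ℝ} (hu : |u| < 1) (s : ℂ) :
    (1 - (u : ℂ)) ^ s * ∏ k : Fin (n - 1), (1 - ζ ^ (k.1 + 1) * u) ^ s = (1 - (u : ℂ) ^ n) ^ s := by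
  have hne : ∀ k ∈ (univ : Finset (Fin (n - 1))), 1 - ζ ^ (k.1 + 1) * u ≠ 0 := fun k _ h => by
    simpa [h] using re_one_sub_pow_mul_pos hζ.pow_eq_one hn.ne' (k.1 + 1) hu
  have h1u : 0 < 1 - u := by linarith [le_abs_self u]
  have h1un : 0 < 1 - u ^ n := by
    have := pow_lt_one₀ (abs_nonneg u) hu hn.ne'
    linarith [le_abs_self (u ^ n), abs_pow u n]
  have hprod : ∏ k : Fin (n - 1), (1 - ζ ^ (k.1 + 1) * u) = (((1 - u ^ n) / (1 - u) : ℝ) : ℂ) := by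
    rw [eq_comm, ofReal_div, div_eq_iff (by exact_mod_cast h1u.ne'), mul_comm]
    push_cast
    exact (hζ.mul_prod_one_sub_pow_succ_mul hn u).symm
  rw [prod_cpow_of_sum_arg_mem _ hne (by
      rw [sum_arg_one_sub_pow_succ_mul_eq_zero hζ.pow_eq_one hu]
      exact ⟨neg_lt_zero.2 Real.pi_pos, Real.pi_pos.le⟩), hprod,
    show 1 - (u : ℂ) = ((1 - u : ℝ) : ℂ) by push_cast; rfl,
    ← mul_cpow_ofReal_nonneg h1u.le (div_nonneg h1un.le h1u.le), ← ofReal_mul,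
    mul_div_cancel₀ _ h1u.ne']
  push_cast
  rfl

lemma ofReal_cpow_natCast_mul_sub_one {u : ℝ} (hu : 0 < u) {n : ℕ} (hn : 0 < n) (s : ℂ) :
    (u : ℂ) ^ (n * s - 1) = (u : ℂ) ^ (n - 1) * ((u : ℂ) ^ n) ^ (s - 1) := by
  have harg : arg (u : ℂ) = 0 := arg_ofReal_of_nonneg hu.le
  rw [← cpow_nat_mul' (by simp [harg, Real.pi_pos]) (by simp [harg, Real.pi_pos.le]),
    ← cpow_natCast, ← cpow_add _ _ (ofReal_ne_zero.2 hu.ne'), Nat.cast_sub hn]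
  ring_nf

lemma integral_cpow_mul_one_sub_pow_cpow (n : ℕ) (hn : 0 < n) (s t : ℂ) :
    ∫ u in (0 : ℝ)..1, (u : ℂ) ^ (n * s - 1) * (1 - (u : ℂ) ^ n) ^ (t - 1) =
      (n : ℂ)⁻¹ * betaIntegral s t := by
  have hsub := intervalIntegral.integral_deriv_smul_comp_of_deriv_nonneg (a := 0) (b := 1)
    (f := fun u : ℝ => u ^ n) (f' := fun u => n * u ^ (n - 1))
    (g := fun x : ℝ => (x : ℂ) ^ (s - 1) * (1 - (x : ℂ)) ^ (t - 1))
    (continuous_pow n).continuousOn (fun x _ => by simpa using hasDerivAt_pow n x)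
    (fun x hx => mul_nonneg n.cast_nonneg (pow_nonneg (by simpa using hx.1.le) _))
  simp only [zero_pow hn.ne', one_pow] at hsub
  rw [betaIntegral, ← hsub, ← intervalIntegral.integral_const_mul]
  refine intervalIntegral.integral_congr_Ioo_of_le zero_le_one fun u hu => ?_
  have hn' : (n : ℂ) ≠ 0 := Nat.cast_ne_zero.2 hn.ne'
  simp only [Function.comp_apply, real_smul, ofReal_mul, ofReal_pow, ofReal_natCast,
    ofReal_cpow_natCast_mul_sub_one hu.1 hn]
  field_simp

lemma lauricellaFD_const_rootsOfUnity (n : ℕ) (hn : 0 < n) (a b : ℂ) :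
    lauricellaFD (n - 1) a (fun _ => b) (1 + a - b)
        (fun k => exp (2 * Real.pi * I * ((k.1 : ℂ) + 1) / n)) =
      Gamma (1 + a - b) / (Gamma a * Gamma (1 - b)) * ((n : ℂ)⁻¹ * betaIntegral (a / n) (1 - b)) := by
  have hζ := isPrimitiveRoot_exp n hn.ne'
  have hroots : ∀ k : Fin (n - 1), exp (2 * Real.pi * I * ((k.1 : ℂ) + 1) / n) =
      exp (2 * Real.pi * I / n) ^ (k.1 + 1) := fun k => by
    rw [← exp_nat_mul]; push_cast; ring_nf
  rw [lauricellaFD, show 1 + a - b - a = 1 - b by ring, ← integral_cpow_mul_one_sub_pow_cpow n hn]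
  congr 1
  refine intervalIntegral.integral_congr_Ioo_of_le zero_le_one fun u hu => ?_
  have hu' : |u| < 1 := abs_lt.2 ⟨by linarith [hu.1], hu.2⟩
  simp only [hroots]
  rw [mul_div_cancel₀ _ (Nat.cast_ne_zero.2 hn.ne'), show 1 - b - 1 = -b by ring, mul_assoc,
    hζ.one_sub_cpow_mul_prod_one_sub_pow_succ_mul_cpow hn hu']

theorem kummer_lauricella_general (n : ℕ) (hn : 2 ≤ n) (a b : ℝ) (ha : 0 < a)
    (hb1 : b < 1) :
    lauricellaFD (n - 1) (a : ℂ) (fun _ => (b : ℂ)) (1 + a - b)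
      (fun k => Complex.exp (2 * Real.pi * Complex.I * ((k.1 : ℂ) + 1) / (n : ℂ))) =
    Complex.Gamma (1 + (a : ℂ) - b) * Complex.Gamma (1 + (a : ℂ) / n) /
      (Complex.Gamma (1 + (a : ℂ)) * Complex.Gamma (1 + (a : ℂ) / n - b)) := by
  have hn0 : 0 < n := by omega
  have ha' : (a : ℂ) ≠ 0 := ofReal_ne_zero.2 ha.ne'
  have hn' : (n : ℂ) ≠ 0 := Nat.cast_ne_zero.2 hn0.ne'
  have han : 0 < ((a : ℂ) / n).re := by
    rw [div_natCast_re, ofReal_re]; positivity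
  have hb : 0 < (1 - b : ℂ).re := by simpa using hb1
  rw [lauricellaFD_const_rootsOfUnity n hn0, betaIntegral_eq_Gamma_mul_div _ _ han hb,
    add_comm 1 (a : ℂ), Gamma_add_one _ ha', add_comm 1 ((a : ℂ) / n),
    Gamma_add_one _ (div_ne_zero ha' hn'), show (a / n + 1 - b : ℂ) = a / n + (1 - b) by ring]
  have hGa := Gamma_ne_zero_of_re_pos (s := a) (by simpa using ha)
  have hGb := Gamma_ne_zero_of_re_pos hb
  have hGab := Gamma_ne_zero_of_re_pos (add_re _ _ ▸ add_pos han hb)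
  field_simp

theorem kummer_lauricella (n : ℕ) (hn : 2 ≤ n) (a b : ℝ) (ha : 0 < a)
    (hb0 : 0 < b) (hb1 : b < 1) :
    lauricellaFD (n - 1) (a : ℂ) (fun _ => (b : ℂ)) (1 + a - b)
      (fun k => Complex.exp (2 * Real.pi * Complex.I * ((k.1 : ℂ) + 1) / (n : ℂ))) =
    Complex.Gamma (1 + (a : ℂ) - b) * Complex.Gamma (1 + (a : ℂ) / n) /
      (Complex.Gamma (1 + (a : ℂ)) * Complex.Gamma (1 + (a : ℂ) / n - b)) :=
  kummer_lauricella_general n hn a b ha hb1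
end

section
/- Let n ≥ 2 be an integer and let a, b be real numbers with a > 0 and 0 < b < 1. Set ω_k = e^{2πik/n} for k = 1, …, n−1. Then F_D^{(n−1)}(1−b; b, …, b; 1+a−b | ω_1/(ω_1−1), …, ω_{n−1}/(ω_{n−1}−1)) = n^b · Γ(1+a−b)·Γ(1+a/n) / (Γ(1+a)·Γ(1+a/n−b)). -/
open MeasureTheory

/-! For a primitive `n`-th root of unity `μ`, put `ω_k = μ^k` and `x_k = ω_k / (ω_k - 1)`.
Then `1 - x_k u = (1 - ω_k (1 - u)) / (1 - ω_k)`, so the factorisation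
`1 - t^n = ∏ (1 - ω_k t)` gives `u ∏ (1 - x_k u) = (1 - (1 - u)^n) / n`.
The factors `1 - x_k u` lie in the right half-plane and come in conjugate pairs,
so their principal powers multiply like powers of positive reals,
and the Euler integrand becomes `n^b (1 - u)^(a-1) (1 - (1 - u)^n)^(-b)`.
The substitutions `v = 1 - u`, `t = v^n` turn the integral into `B(a/n, 1 - b) / n`,
and `Γ(1 + z) = z Γ(z)` rearranges the Gamma factors. -/

open Complex Finset Polynomial ComplexConjugate

namespace IsPrimitiveRoot

theorem one_sub_mul_prod_one_sub_pow_mul {R : Type*} [CommRing R] [IsDomain R] {m : ℕ} {μ : R}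
    (hμ : IsPrimitiveRoot μ (m + 1)) (t : R) :
    (1 - t) * ∏ k ∈ range m, (1 - μ ^ (k + 1) * t) = 1 - t ^ (m + 1) := by
  have h := congrArg (eval 1) (X_pow_sub_C_eq_prod hμ m.succ_pos (rfl : t ^ (m + 1) = _))
  simpa [eval_prod, prod_range_succ', mul_comm] using h.symm

theorem mul_prod_one_sub_div_sub_one_mul {K : Type*} [Field K] {m : ℕ} {μ : K}
    (hμ : IsPrimitiveRoot μ (m + 1)) (u : K) :
    (m + 1) * (u * ∏ k ∈ range m, (1 - μ ^ (k + 1) / (μ ^ (k + 1) - 1) * u)) =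
      1 - (1 - u) ^ (m + 1) := by
  have hne : ∀ k ∈ range m, 1 - μ ^ (k + 1) ≠ 0 := fun k hk =>
    sub_ne_zero.2 (hμ.pow_ne_one_of_pos_of_lt k.succ_ne_zero (by simpa using hk)).symm
  have hfactor : ∀ k ∈ range m, 1 - μ ^ (k + 1) / (μ ^ (k + 1) - 1) * u =
      (1 - μ ^ (k + 1) * (1 - u)) / (1 - μ ^ (k + 1)) := fun k hk => by
    have hne' := sub_ne_zero.2 (sub_ne_zero.1 (hne k hk)).symm
    rw [eq_div_iff (hne k hk)]
    field_simp
    ring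
  have horder := hμ.prod_one_sub_pow_eq_order
  have hm : (m + 1 : K) ≠ 0 := horder ▸ prod_ne_zero_iff.2 hne
  rw [prod_congr rfl hfactor, prod_div_distrib, horder, ← hμ.one_sub_mul_prod_one_sub_pow_mul,
    sub_sub_cancel, mul_div_assoc', mul_div_assoc', mul_div_cancel_left₀ _ hm]

end IsPrimitiveRoot

theorem IsPrimitiveRoot.conj_pow_succ {m : ℕ} {μ : ℂ} (hμ : IsPrimitiveRoot μ (m + 1))
    (k : Fin m) : conj (μ ^ (k.1 + 1)) = μ ^ ((Fin.rev k).1 + 1) := by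
  have hnorm : ‖μ ^ (k.1 + 1)‖ = 1 := by
    rw [norm_pow, hμ.norm'_eq_one m.succ_ne_zero, one_pow]
  rw [← Complex.inv_eq_conj hnorm, eq_comm]
  apply eq_inv_of_mul_eq_one_left
  rw [← pow_add, Fin.val_rev, show m - (k.1 + 1) + 1 + (k.1 + 1) = m + 1 by omega, hμ.pow_eq_one]

theorem Complex.re_div_sub_one_of_norm_eq_one {ω : ℂ} (hω : ‖ω‖ = 1) (h1 : ω ≠ 1) :
    (ω / (ω - 1)).re = 1 / 2 := by
  have hω0 : ω ≠ 0 := by rintro rfl; simp at hω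
  have hsub : ω - 1 ≠ 0 := sub_ne_zero.2 h1
  have hsub' : 1 - ω ≠ 0 := sub_ne_zero.2 h1.symm
  have hsum : ω / (ω - 1) + conj (ω / (ω - 1)) = 1 := by
    rw [map_div₀, map_sub, map_one, ← inv_eq_conj hω]
    field_simp
    ring
  rw [add_conj] at hsum
  have := congrArg re hsum
  simp only [ofReal_re, one_re] at this
  linarith

theorem Complex.prod_cpow_of_conj_comp_perm {ι : Type*} [Fintype ι] (σ : Equiv.Perm ι)
    {z : ι → ℂ} (hz : ∀ k, z k ∈ slitPlane) (hσ : ∀ k, z (σ k) = conj (z k))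
    (s : ℂ) :
    ∏ k, z k ^ s = (∏ k, z k) ^ s := by
  set S := ∑ k, log (z k)
  have hS : conj S = S := calc
    conj S = ∑ k, log (conj (z k)) := by
      rw [map_sum]
      exact sum_congr rfl fun k _ => (log_conj _ (mem_slitPlane_iff_arg.1 (hz k)).1).symm
    _ = ∑ k, log (z (σ k)) := by simp_rw [hσ]
    _ = S := Equiv.sum_comp σ (fun k => log (z k))
  have hSim : S.im = 0 := conj_eq_iff_im.1 hS
  have hprod : ∏ k, z k = exp S := by
    rw [exp_sum]
    exact prod_congr rfl fun k _ => (exp_log (slitPlane_ne_zero (hz k))).symm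
  rw [hprod, cpow_def_of_ne_zero (exp_ne_zero S), log_exp (by simp [hSim, Real.pi_pos])
    (by simp [hSim, Real.pi_pos.le]), sum_mul, exp_sum]
  exact prod_congr rfl fun k _ => cpow_def_of_ne_zero (slitPlane_ne_zero (hz k)) s

theorem IsPrimitiveRoot.cpow_mul_prod_one_sub_mul_cpow {m : ℕ} {μ : ℂ}
    (hμ : IsPrimitiveRoot μ (m + 1)) {u : ℝ} (hu0 : 0 < u) (hu1 : u ≤ 1) (s : ℂ) :
    (u : ℂ) ^ s * ∏ k : Fin m, (1 - μ ^ (k.1 + 1) / (μ ^ (k.1 + 1) - 1) * u) ^ s =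
      (((1 - (1 - u) ^ (m + 1)) / (m + 1) : ℝ) : ℂ) ^ s := by
  set z : Fin m → ℂ := fun k => 1 - μ ^ (k.1 + 1) / (μ ^ (k.1 + 1) - 1) * u
  have hz : ∀ k, z k ∈ slitPlane := fun k => by
    have hre := re_div_sub_one_of_norm_eq_one
      (by rw [norm_pow, hμ.norm'_eq_one m.succ_ne_zero, one_pow])
      (hμ.pow_ne_one_of_pos_of_lt k.1.succ_ne_zero (by omega))
    refine mem_slitPlane_iff.2 (Or.inl ?_)
    simp only [z, sub_re, one_re, re_mul_ofReal, hre]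
    linarith
  have hσ : ∀ k, z (Fin.revPerm k) = conj (z k) := fun k => by
    simp [z, hμ.conj_pow_succ]
  have hprod : (u : ℂ) * ∏ k, z k = (((1 - (1 - u) ^ (m + 1)) / (m + 1) : ℝ) : ℂ) := by
    rw [Fin.prod_univ_eq_prod_range (fun k => 1 - μ ^ (k + 1) / (μ ^ (k + 1) - 1) * u),
      ofReal_div, eq_div_iff (by exact_mod_cast m.succ_ne_zero), mul_comm]
    push_cast
    exact hμ.mul_prod_one_sub_div_sub_one_mul (u : ℂ)
  set P : ℝ := (1 - (1 - u) ^ (m + 1)) / (m + 1) / u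
  have hP : ∏ k, z k = P := by
    rw [eq_comm, ofReal_div, ← hprod, mul_div_cancel_left₀ _ (ofReal_ne_zero.2 hu0.ne')]
  have hP0 : 0 ≤ P := by
    have : (1 - u) ^ (m + 1) ≤ 1 := pow_le_one₀ (by linarith) (by linarith)
    positivity
  rw [prod_cpow_of_conj_comp_perm Fin.revPerm hz hσ, hP, ← mul_cpow_ofReal_nonneg hu0.le hP0,
    ← hP, hprod]

theorem intervalIntegral.integral_comp_rpow_zero_one {E : Type*} [NormedAddCommGroup E]
    [NormedSpace ℝ E] (g : ℝ → E) {p : ℝ} (hp : 0 < p) :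
    ∫ x in (0 : ℝ)..1, (p * x ^ (p - 1)) • g (x ^ p) = ∫ y in (0 : ℝ)..1, g y := by
  have himage : (· ^ p) '' Set.Ioo 0 1 = Set.Ioo (0 : ℝ) 1 := by
    ext y
    constructor
    · rintro ⟨x, ⟨hx0, hx1⟩, rfl⟩
      exact ⟨Real.rpow_pos_of_pos hx0 p, Real.rpow_lt_one hx0.le hx1 hp⟩
    · rintro ⟨hy0, hy1⟩
      exact ⟨y ^ p⁻¹,
        ⟨Real.rpow_pos_of_pos hy0 _, Real.rpow_lt_one hy0.le hy1 (inv_pos.2 hp)⟩,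
        Real.rpow_inv_rpow hy0.le hp.ne'⟩
  have := integral_image_eq_integral_abs_deriv_smul (measurableSet_Ioo (a := 0) (b := 1))
    (fun x hx => (Real.hasDerivAt_rpow_const (Or.inl hx.1.ne')).hasDerivWithinAt)
    ((Real.rpow_left_injOn hp.ne').mono fun x hx => hx.1.le) g
  rw [integral_of_le zero_le_one, integral_of_le zero_le_one, integral_Ioc_eq_integral_Ioo,
    integral_Ioc_eq_integral_Ioo]
  conv_rhs => rw [← himage, this]
  refine setIntegral_congr_fun measurableSet_Ioo fun x hx => ?_
  rw [abs_of_nonneg (by have := hx.1; positivity)]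

theorem Complex.betaIntegral_div_ofReal (a c : ℂ) {p : ℝ} (hp : 0 < p) :
    betaIntegral (a / p) c =
      p * ∫ x in (0 : ℝ)..1, (x : ℂ) ^ (a - 1) * (1 - (x : ℂ) ^ (p : ℂ)) ^ (c - 1) := by
  rw [betaIntegral, ← intervalIntegral.integral_comp_rpow_zero_one _ hp,
    ← intervalIntegral.integral_const_mul]
  refine intervalIntegral.integral_congr_ae (Filter.Eventually.of_forall fun x hx => ?_)
  have hx0 : 0 < x := by simpa using hx.1
  have hp0 : (p : ℂ) ≠ 0 := ofReal_ne_zero.2 hp.ne'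
  have hxp : ((x : ℂ) ^ (p : ℂ)) ^ (a / p - 1) = (x : ℂ) ^ (a - p) := by
    rw [← ofReal_cpow hx0.le, ← cpow_mul_ofReal_nonneg hx0.le]
    congr 1
    field_simp
  have hpow : (x : ℂ) ^ ((p - 1 : ℝ) : ℂ) * (x : ℂ) ^ (a - p) = (x : ℂ) ^ (a - 1) := by
    rw [← cpow_add _ _ (ofReal_ne_zero.2 hx0.ne')]
    push_cast
    ring_nf
  simp only [real_smul, ofReal_mul, ofReal_cpow hx0.le, hxp, ← hpow]
  ring

theorem IsPrimitiveRoot.integral_lauricellaFD_integrand {m : ℕ} {μ : ℂ}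
    (hμ : IsPrimitiveRoot μ (m + 1)) (a b : ℂ) :
    ∫ u in (0 : ℝ)..1, (u : ℂ) ^ (1 - b - 1) * (1 - (u : ℂ)) ^ (1 + a - b - (1 - b) - 1) *
        ∏ k : Fin m, (1 - μ ^ (k.1 + 1) / (μ ^ (k.1 + 1) - 1) * u) ^ (-b) =
      ((m + 1 : ℝ) : ℂ) ^ b *
        ∫ v in (0 : ℝ)..1,
          (v : ℂ) ^ (a - 1) * (1 - (v : ℂ) ^ ((m + 1 : ℝ) : ℂ)) ^ (1 - b - 1) := by
  have hN : (0 : ℝ) < m + 1 := by positivity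
  have hcpowN : ∀ z : ℂ, z ^ ((m + 1 : ℝ) : ℂ) = z ^ (m + 1) := fun z => by
    rw [← cpow_natCast]
    push_cast
    rfl
  have hintegrand : ∀ u ∈ Set.uIoc (0 : ℝ) 1,
      (u : ℂ) ^ (1 - b - 1) * (1 - (u : ℂ)) ^ (1 + a - b - (1 - b) - 1) *
          ∏ k : Fin m, (1 - μ ^ (k.1 + 1) / (μ ^ (k.1 + 1) - 1) * u) ^ (-b) =
        ((m + 1 : ℝ) : ℂ) ^ b * (((1 - u : ℝ) : ℂ) ^ (a - 1) *
          (1 - ((1 - u : ℝ) : ℂ) ^ ((m + 1 : ℝ) : ℂ)) ^ (1 - b - 1)) := by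
    rintro u ⟨hu0, hu1⟩
    simp only [zero_le_one, min_eq_left, max_eq_right] at hu0 hu1
    have hpow : 0 ≤ 1 - (1 - u) ^ (m + 1) :=
      sub_nonneg.2 (pow_le_one₀ (by linarith) (by linarith))
    rw [show (1 : ℂ) - b - 1 = -b by ring, show 1 + a - b - (1 - b) - 1 = a - 1 by ring,
      mul_right_comm, hμ.cpow_mul_prod_one_sub_mul_cpow hu0 hu1, ofReal_div,
      div_cpow_ofReal_nonneg hpow hN.le, hcpowN, cpow_neg ((m + 1 : ℝ) : ℂ), div_inv_eq_mul]
    push_cast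
    ring
  rw [intervalIntegral.integral_congr_ae (Filter.Eventually.of_forall hintegrand),
    intervalIntegral.integral_const_mul, intervalIntegral.integral_comp_sub_left
      (fun v : ℝ => (v : ℂ) ^ (a - 1) * (1 - (v : ℂ) ^ ((m + 1 : ℝ) : ℂ)) ^ (1 - b - 1)),
    sub_self, sub_zero]

theorem IsPrimitiveRoot.lauricellaFD_eq {m : ℕ} {μ : ℂ} (hμ : IsPrimitiveRoot μ (m + 1))
    {a b : ℂ} (ha : 0 < a.re) (hb : b.re < 1) :
    lauricellaFD m (1 - b) (fun _ => b) (1 + a - b)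
        (fun k => μ ^ (k.1 + 1) / (μ ^ (k.1 + 1) - 1)) =
      (m + 1 : ℂ) ^ b * Gamma (1 + a - b) * Gamma (1 + a / (m + 1)) /
        (Gamma (1 + a) * Gamma (1 + a / (m + 1) - b)) := by
  rw [lauricellaFD, hμ.integral_lauricellaFD_integrand, show 1 + a - b - (1 - b) = a by ring]
  set N : ℝ := m + 1
  have hN : 0 < N := by positivity
  have hNC : (N : ℂ) = m + 1 := by push_cast [N]; rfl
  have hNC0 : (N : ℂ) ≠ 0 := by exact_mod_cast hN.ne'
  have ha0 : a ≠ 0 := fun h => by simp [h] at ha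
  have hb' : 0 < (1 - b).re := by simp [hb]
  have haN : 0 < (a / N).re := by rw [div_ofReal_re]; positivity
  have hbeta := betaIntegral_div_ofReal a (1 - b) hN
  rw [betaIntegral_eq_Gamma_mul_div _ _ haN hb'] at hbeta
  have hG1 := Gamma_ne_zero_of_re_pos hb'
  have hG2 := Gamma_ne_zero_of_re_pos ha
  have hG3 := Gamma_ne_zero_of_re_pos (s := a / N + (1 - b)) (by rw [add_re]; exact add_pos haN hb')
  rw [eq_div_of_mul_eq hNC0 ((mul_comm _ _).trans hbeta.symm), ← hNC, add_comm 1 a,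
    Gamma_add_one a ha0, add_comm 1 (a / N), Gamma_add_one _ (div_ne_zero ha0 hNC0),
    show a / N + 1 - b = a / N + (1 - b) by ring]
  field_simp

theorem kummer_lauricella_pfaff_general (n : ℕ) (hn : 2 ≤ n) (a b : ℝ) (ha : 0 < a)
    (hb1 : b < 1) :
    lauricellaFD (n - 1) (1 - (b : ℂ)) (fun _ => (b : ℂ)) (1 + a - b)
      (fun k =>
        Complex.exp (2 * Real.pi * Complex.I * ((k.1 : ℂ) + 1) / (n : ℂ)) /
          (Complex.exp (2 * Real.pi * Complex.I * ((k.1 : ℂ) + 1) / (n : ℂ)) - 1)) =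
    ((n : ℝ) ^ b : ℝ) * Complex.Gamma (1 + (a : ℂ) - b) * Complex.Gamma (1 + (a : ℂ) / n) /
      (Complex.Gamma (1 + (a : ℂ)) * Complex.Gamma (1 + (a : ℂ) / n - b)) := by
  obtain ⟨m, rfl⟩ : ∃ m, n = m + 1 := ⟨n - 1, by omega⟩
  have hμ := isPrimitiveRoot_exp (m + 1) m.succ_ne_zero
  have hω : ∀ k : ℕ, exp (2 * Real.pi * I * ((k : ℂ) + 1) / ((m + 1 : ℕ) : ℂ)) =
      exp (2 * Real.pi * I / ((m + 1 : ℕ) : ℂ)) ^ (k + 1) := fun k => by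
    rw [← exp_nat_mul]
    push_cast
    ring_nf
  simp only [hω]
  refine (hμ.lauricellaFD_eq (by simpa using ha) (by simpa using hb1)).trans ?_
  rw [ofReal_cpow (by positivity)]
  push_cast
  rfl

theorem kummer_lauricella_pfaff (n : ℕ) (hn : 2 ≤ n) (a b : ℝ) (ha : 0 < a)
    (hb0 : 0 < b) (hb1 : b < 1) :
    lauricellaFD (n - 1) (1 - (b : ℂ)) (fun _ => (b : ℂ)) (1 + a - b)
      (fun k =>
        Complex.exp (2 * Real.pi * Complex.I * ((k.1 : ℂ) + 1) / (n : ℂ)) /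
          (Complex.exp (2 * Real.pi * Complex.I * ((k.1 : ℂ) + 1) / (n : ℂ)) - 1)) =
    ((n : ℝ) ^ b : ℝ) * Complex.Gamma (1 + (a : ℂ) - b) * Complex.Gamma (1 + (a : ℂ) / n) /
      (Complex.Gamma (1 + (a : ℂ)) * Complex.Gamma (1 + (a : ℂ) / n - b)) :=
  kummer_lauricella_pfaff_general n hn a b ha hb1
end

section
/- Let m ≥ 1 be an integer, let a, b be real numbers with a > 0, b > 0 and 2mb > a, and set x_k = 1 + cos((2k−1)π/(2m)) + i·sin((2k−1)π/(2m)) for k = 1, …, 2m. Then F_D^{(2m)}(2mb−a; b, …, b; 2mb | x_1, …, x_{2m}) = (1/(2m)) · Γ(a/(2m))·Γ(2mb)·Γ((2mb−a)/(2m)) / (Γ(a)·Γ(b)·Γ(2mb−a)). -/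
/-!
Write `x_k = 1 + ζ_k`, where `ζ_k = exp(i(2k+1)π/(2m))` runs over the `2m`-th roots of `-1`.
Then `1 - x_k u = (1 - u) - u ζ_k`, and the product of these factors is `u^(2m) + (1-u)^(2m)`.
The factors come in conjugate pairs `k, 2m-1-k` and none of them lies on the branch cut, so the
principal powers multiply out: `∏ (1 - x_k u)^(-b) = (u^(2m) + (1-u)^(2m))^(-b)`.
The substitution `v = u^n / (u^n + (1-u)^n)` with `n = 2m` turns the resulting real integral
into the Beta integral `B(s/n, a/n) / n`, where `s = 2mb - a`.
-/

open MeasureTheory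

namespace Lauricella

section Substitution

open Set

noncomputable def betaSubst (n : ℕ) (u : ℝ) : ℝ := u ^ n / (u ^ n + (1 - u) ^ n)

variable {n : ℕ}

lemma pow_add_one_sub_pow_pos (hn : n ≠ 0) {u : ℝ} (hu : u ∈ Icc (0 : ℝ) 1) :
    0 < u ^ n + (1 - u) ^ n := by
  rcases hu.1.eq_or_lt with rfl | hu0
  · simp [hn]
  · have := pow_nonneg (sub_nonneg.2 hu.2) n
    positivity

lemma hasDerivAt_betaSubst (hn : n ≠ 0) {u : ℝ} (hu : u ∈ Icc (0 : ℝ) 1) :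
    HasDerivAt (betaSubst n)
      (n * u ^ (n - 1) * (1 - u) ^ (n - 1) / (u ^ n + (1 - u) ^ n) ^ 2) u := by
  have hQ := pow_add_one_sub_pow_pos hn hu
  have h1 := hasDerivAt_pow n u
  have h2 : HasDerivAt (fun u : ℝ => (1 - u) ^ n) (-(n * (1 - u) ^ (n - 1))) u := by
    simpa [Function.comp_def] using
      (hasDerivAt_pow n (1 - u)).comp u ((hasDerivAt_id u).const_sub 1)
  refine (h1.div (h1.fun_add h2) hQ.ne').congr_deriv ?_
  obtain ⟨k, rfl⟩ := Nat.exists_eq_succ_of_ne_zero hn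
  simp only [Nat.succ_sub_one, pow_succ]
  field_simp
  ring

lemma strictMonoOn_betaSubst (hn : n ≠ 0) : StrictMonoOn (betaSubst n) (Icc 0 1) := by
  refine strictMonoOn_of_deriv_pos (convex_Icc 0 1) (fun u hu => ?_) fun u hu => ?_
  · exact (hasDerivAt_betaSubst hn hu).continuousAt.continuousWithinAt
  · rw [interior_Icc] at hu
    have := sub_pos.2 hu.2
    rw [(hasDerivAt_betaSubst hn (Ioo_subset_Icc_self hu)).deriv]
    have := hu.1
    positivity

lemma betaSubst_image_Ioo (hn : n ≠ 0) : betaSubst n '' Ioo 0 1 = Ioo 0 1 := by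
  have hcont : ContinuousOn (betaSubst n) (Icc 0 1) :=
    fun u hu => (hasDerivAt_betaSubst hn hu).continuousAt.continuousWithinAt
  have h0 : betaSubst n 0 = 0 := by simp [betaSubst, hn]
  have h1 : betaSubst n 1 = 1 := by simp [betaSubst, hn]
  have := intermediate_value_Ioo zero_le_one hcont
  rw [h0, h1] at this
  refine this.antisymm' ?_
  rintro _ ⟨u, hu, rfl⟩
  have hmono := strictMonoOn_betaSubst hn
  have hu' := Ioo_subset_Icc_self hu
  exact ⟨h0 ▸ hmono (left_mem_Icc.2 zero_le_one) hu' hu.1,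
    h1 ▸ hmono hu' (right_mem_Icc.2 zero_le_one) hu.2⟩

lemma one_sub_betaSubst (hn : n ≠ 0) {u : ℝ} (hu : u ∈ Icc (0 : ℝ) 1) :
    1 - betaSubst n u = (1 - u) ^ n / (u ^ n + (1 - u) ^ n) := by
  have := (pow_add_one_sub_pow_pos hn hu).ne'
  rw [betaSubst]
  field_simp
  ring

lemma pow_pred_mul_pow_div_rpow {X C : ℝ} (hn : n ≠ 0) (hX : 0 < X) (hC : 0 < C) (γ : ℝ) :
    X ^ (n - 1) * (X ^ n / C) ^ (γ - 1) = X ^ (n * γ - 1) / C ^ (γ - 1) := by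
  rw [Real.div_rpow (by positivity) hC.le, ← Real.rpow_natCast, ← Real.rpow_natCast,
    ← Real.rpow_mul hX.le, mul_div_assoc', ← Real.rpow_add hX, Nat.cast_sub (by omega)]
  ring_nf

lemma abs_deriv_mul_betaKernel_betaSubst (hn : n ≠ 0) {u : ℝ} (hu : u ∈ Ioo (0 : ℝ) 1)
    (α β : ℝ) :
    |n * u ^ (n - 1) * (1 - u) ^ (n - 1) / (u ^ n + (1 - u) ^ n) ^ 2| *
        (betaSubst n u ^ (α - 1) * (1 - betaSubst n u) ^ (β - 1)) =
      n * (u ^ (n * α - 1) * (1 - u) ^ (n * β - 1) * (u ^ n + (1 - u) ^ n) ^ (-(α + β))) := by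
  have hu0 := hu.1
  have hu1 := sub_pos.2 hu.2
  have hQ := pow_add_one_sub_pow_pos hn (Ioo_subset_Icc_self hu)
  rw [one_sub_betaSubst hn (Ioo_subset_Icc_self hu), betaSubst, abs_of_pos (by positivity)]
  generalize u ^ n + (1 - u) ^ n = Q at hQ ⊢
  have hQpow : Q ^ (-(α + β)) = (Q ^ 2 * Q ^ (α - 1) * Q ^ (β - 1))⁻¹ := by
    rw [← Real.rpow_natCast, ← Real.rpow_add hQ, ← Real.rpow_add hQ, ← Real.rpow_neg hQ.le]
    ring_nf
  calc _ = n * (u ^ (n - 1) * (u ^ n / Q) ^ (α - 1)) *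
        ((1 - u) ^ (n - 1) * ((1 - u) ^ n / Q) ^ (β - 1)) / Q ^ 2 := by ring
    _ = _ := by
      rw [pow_pred_mul_pow_div_rpow hn hu0 hQ, pow_pred_mul_pow_div_rpow hn hu1 hQ, hQpow]
      field_simp

theorem integral_rpow_mul_rpow_eq_mul_integral (hn : n ≠ 0) (α β : ℝ) :
    ∫ v in (0 : ℝ)..1, v ^ (α - 1) * (1 - v) ^ (β - 1) =
      n * ∫ u in (0 : ℝ)..1,
        u ^ (n * α - 1) * (1 - u) ^ (n * β - 1) * (u ^ n + (1 - u) ^ n) ^ (-(α + β)) := by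
  have hsubst := integral_image_eq_integral_abs_deriv_smul measurableSet_Ioo
    (fun u hu => (hasDerivAt_betaSubst hn (Ioo_subset_Icc_self hu)).hasDerivWithinAt)
    ((strictMonoOn_betaSubst hn).injOn.mono Ioo_subset_Icc_self)
    (fun v => v ^ (α - 1) * (1 - v) ^ (β - 1))
  rw [betaSubst_image_Ioo hn] at hsubst
  simp only [intervalIntegral.integral_of_le zero_le_one, integral_Ioc_eq_integral_Ioo, hsubst,
    ← integral_const_mul]
  exact setIntegral_congr_fun measurableSet_Ioo fun u hu =>
    abs_deriv_mul_betaKernel_betaSubst hn hu α β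

end Substitution

section RootsOfMinusOne

open Finset Complex ComplexConjugate

theorem prod_sub_mul_exp_eq_pow_add_pow {n : ℕ} (hn : n ≠ 0) (u v : ℂ) :
    ∏ k ∈ range n, (v - u * exp (↑((2 * k + 1) * Real.pi / n) * I)) = v ^ n + u ^ n := by
  set η := exp (↑(Real.pi / n) * I)
  have hη : (u * η) ^ n = -u ^ n := by
    rw [mul_pow, ← exp_nat_mul, show (n : ℂ) * (↑(Real.pi / n) * I) = Real.pi * I by
      push_cast; field_simp, exp_pi_mul_I, mul_neg_one]
  have hroots := congrArg (Polynomial.eval v)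
    (X_pow_sub_C_eq_prod (isPrimitiveRoot_exp n hn) (Nat.pos_of_ne_zero hn) hη)
  simp only [Polynomial.eval_sub, Polynomial.eval_pow, Polynomial.eval_X, Polynomial.eval_C,
    Polynomial.eval_prod, sub_neg_eq_add] at hroots
  rw [hroots]
  refine prod_congr rfl fun k _ => ?_
  rw [mul_left_comm, ← exp_nat_mul, ← exp_add]
  congr 3
  push_cast
  field_simp

theorem prod_range_two_mul {M : Type*} [CommMonoid M] (f : ℕ → M) (m : ℕ) :
    ∏ k ∈ range (2 * m), f k = ∏ k ∈ range m, f k * f (2 * m - 1 - k) := by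
  rw [two_mul, prod_range_add, ← prod_range_reflect (fun i => f (m + i)) m, ← prod_mul_distrib]
  refine prod_congr rfl fun k hk => ?_
  rw [Finset.mem_range] at hk
  congr 2
  omega

theorem cpow_mul_conj_cpow {z : ℂ} (hz : z.arg ≠ Real.pi) (s : ℝ) :
    z ^ (s : ℂ) * conj z ^ (s : ℂ) = ↑((‖z‖ ^ 2) ^ s) := by
  rw [conj_cpow _ _ hz, conj_ofReal, mul_conj, normSq_eq_norm_sq, norm_cpow_real,
    Real.rpow_pow_comm (norm_nonneg z)]

theorem prod_range_two_mul_cpow_of_conj {m : ℕ} {f : ℕ → ℂ}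
    (hconj : ∀ k < m, f (2 * m - 1 - k) = conj (f k)) (harg : ∀ k < m, (f k).arg ≠ Real.pi)
    (s : ℝ) :
    ∏ k ∈ range (2 * m), f k ^ (s : ℂ) = ↑(‖∏ k ∈ range (2 * m), f k‖ ^ s) := by
  rw [prod_range_two_mul, prod_range_two_mul, norm_prod, ← Real.finsetProd_rpow _ _
    fun _ _ => norm_nonneg _, ofReal_prod]
  refine prod_congr rfl fun k hk => ?_
  rw [Finset.mem_range] at hk
  rw [hconj k hk, cpow_mul_conj_cpow (harg k hk), norm_mul, norm_conj, sq]

variable {m : ℕ}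

lemma sin_angle_pos {k : ℕ} (hk : k < m) : 0 < Real.sin ((2 * k + 1) * Real.pi / (2 * m)) := by
  have hm : (0 : ℝ) < m := by exact_mod_cast (k.zero_le.trans_lt hk)
  have hk' : (2 * k + 1 : ℝ) < 2 * m := by exact_mod_cast (by omega : 2 * k + 1 < 2 * m)
  apply Real.sin_pos_of_pos_of_lt_pi (by positivity)
  rw [div_lt_iff₀ (by positivity)]
  nlinarith [Real.pi_pos]

lemma exp_angle_reflect {k : ℕ} (hk : k < m) :
    exp (↑((2 * ↑(2 * m - 1 - k) + 1) * Real.pi / ↑(2 * m)) * I) =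
      conj (exp (↑((2 * k + 1) * Real.pi / ↑(2 * m)) * I)) := by
  rw [← exp_conj, map_mul, conj_ofReal, conj_I, Nat.cast_sub (by omega), Nat.cast_sub (by omega)]
  -- the two angles differ by `2π`
  rw [exp_eq_exp_iff_exists_int]
  refine ⟨1, ?_⟩
  have : (m : ℂ) ≠ 0 := by exact_mod_cast (by omega : m ≠ 0)
  push_cast
  field_simp
  ring

theorem prod_one_sub_mul_cpow (hm : m ≠ 0) (u s : ℝ) :
    ∏ k : Fin (2 * m), (1 - (1 + ↑(Real.cos ((2 * (k.1 : ℝ) + 1) * Real.pi / (2 * m))) +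
        I * ↑(Real.sin ((2 * (k.1 : ℝ) + 1) * Real.pi / (2 * m)))) * ↑u) ^ (s : ℂ) =
      ↑((u ^ (2 * m) + (1 - u) ^ (2 * m)) ^ s) := by
  set f : ℕ → ℂ := fun k =>
    ↑(1 - u) - ↑u * exp (↑((2 * k + 1) * Real.pi / ↑(2 * m)) * I)
  have hf : ∀ k : ℕ, 1 - (1 + ↑(Real.cos ((2 * (k : ℝ) + 1) * Real.pi / (2 * m))) +
        I * ↑(Real.sin ((2 * (k : ℝ) + 1) * Real.pi / (2 * m)))) * (u : ℂ) = f k := by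
    intro k
    simp only [f, exp_mul_I, ← ofReal_cos, ← ofReal_sin]
    push_cast
    ring
  have hconj : ∀ k < m, f (2 * m - 1 - k) = conj (f k) := by
    intro k hk
    simp only [f, exp_angle_reflect hk, map_sub, map_mul, conj_ofReal]
  have harg : ∀ k < m, (f k).arg ≠ Real.pi := by
    intro k hk h
    obtain ⟨hre, him⟩ := arg_eq_pi_iff.1 h
    rw [← hf] at hre him
    have hu : u = 0 := by simpa [-ofReal_cos, -ofReal_sin, (sin_angle_pos hk).ne'] using him
    norm_num [hu] at hre
  simp only [hf]
  rw [Fin.prod_univ_eq_prod_range (fun k => f k ^ (s : ℂ)),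
    prod_range_two_mul_cpow_of_conj hconj harg,
    prod_sub_mul_exp_eq_pow_add_pow (by omega), ← ofReal_pow, ← ofReal_pow, ← ofReal_add,
    norm_real, Real.norm_of_nonneg (add_nonneg ((even_two_mul m).pow_nonneg _)
      ((even_two_mul m).pow_nonneg _)), add_comm]

end RootsOfMinusOne

section Beta

open Set Complex

theorem betaIntegral_ofReal (α β : ℝ) :
    betaIntegral α β = ↑(∫ v in (0 : ℝ)..1, v ^ (α - 1) * (1 - v) ^ (β - 1)) := by
  rw [betaIntegral, ← intervalIntegral.integral_ofReal]
  refine intervalIntegral.integral_congr fun v hv => ?_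
  rw [uIcc_of_le zero_le_one] at hv
  simp only [ofReal_mul, ofReal_cpow hv.1, ofReal_cpow (sub_nonneg.2 hv.2)]
  push_cast
  rfl

theorem integral_mul_pow_add_pow_rpow_eq_Gamma {n : ℕ} (hn : n ≠ 0) {s t : ℝ} (hs : 0 < s)
    (ht : 0 < t) :
    ↑(∫ u in (0 : ℝ)..1,
        u ^ (s - 1) * (1 - u) ^ (t - 1) * (u ^ n + (1 - u) ^ n) ^ (-((s + t) / n))) =
      Gamma ↑(s / n) * Gamma ↑(t / n) / (n * Gamma ↑((s + t) / n)) := by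
  have hn' : (0 : ℝ) < n := by exact_mod_cast Nat.pos_of_ne_zero hn
  have hsubst := integral_rpow_mul_rpow_eq_mul_integral hn (s / n) (t / n)
  rw [mul_div_cancel₀ _ hn'.ne', mul_div_cancel₀ _ hn'.ne', ← add_div] at hsubst
  have hΓ : Gamma ↑((s + t) / n) ≠ 0 :=
    Gamma_ne_zero_of_re_pos (by simpa using div_pos (add_pos hs ht) hn')
  rw [Gamma_mul_Gamma_eq_betaIntegral (by simpa using div_pos hs hn')
      (by simpa using div_pos ht hn'),
    betaIntegral_ofReal, hsubst, ← ofReal_add, ← add_div, ofReal_mul, ofReal_natCast]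
  field_simp

end Beta

end Lauricella

theorem lauricella_even_value_general (m : ℕ) (a b : ℝ) (ha : 0 < a)
    (hab : a < 2 * m * b) :
    lauricellaFD (2 * m) (2 * m * (b : ℂ) - a) (fun _ => (b : ℂ)) (2 * m * (b : ℂ))
      (fun k =>
        1 + Real.cos ((2 * (k.1 : ℝ) + 1) * Real.pi / (2 * m)) +
          Complex.I * Real.sin ((2 * (k.1 : ℝ) + 1) * Real.pi / (2 * m))) =
    (1 / (2 * m)) *
      (Complex.Gamma ((a : ℂ) / (2 * m)) * Complex.Gamma (2 * m * (b : ℂ)) *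
        Complex.Gamma ((2 * m * (b : ℂ) - a) / (2 * m))) /
      (Complex.Gamma (a : ℂ) * Complex.Gamma (b : ℂ) * Complex.Gamma (2 * m * (b : ℂ) - a)) := by
  have hm : m ≠ 0 := by rintro rfl; linarith [show a < 0 by simpa using hab]
  set s := 2 * m * b - a with hs_def
  have hs : 0 < s := by linarith
  have hb : (s + a) / ↑(2 * m) = b := by push_cast [hs_def]; field_simp; ring
  have hsC : 2 * m * (b : ℂ) - a = s := by push_cast [hs_def]; ring
  have hcC : 2 * m * (b : ℂ) = s + a := by push_cast [hs_def]; ring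
  rw [hsC, hcC, lauricellaFD, intervalIntegral.integral_congr (g := fun u : ℝ =>
      ↑(u ^ (s - 1) * (1 - u) ^ (a - 1) *
        (u ^ (2 * m) + (1 - u) ^ (2 * m)) ^ (-((s + a) / ↑(2 * m)))))
      fun u hu => ?_, intervalIntegral.integral_ofReal,
    Lauricella.integral_mul_pow_add_pow_rpow_eq_Gamma (by omega) hs ha, hb, add_sub_cancel_left]
  · push_cast
    ring
  · rw [Set.uIcc_of_le zero_le_one] at hu
    dsimp only
    rw [hb, ← Complex.ofReal_neg, Lauricella.prod_one_sub_mul_cpow hm, Complex.ofReal_mul,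
      Complex.ofReal_mul, Complex.ofReal_cpow hu.1, Complex.ofReal_cpow (sub_nonneg.2 hu.2),
      add_sub_cancel_left]
    push_cast
    rfl

theorem lauricella_even_value (m : ℕ) (hm : 1 ≤ m) (a b : ℝ) (ha : 0 < a) (hb : 0 < b)
    (hab : a < 2 * m * b) :
    lauricellaFD (2 * m) (2 * m * (b : ℂ) - a) (fun _ => (b : ℂ)) (2 * m * (b : ℂ))
      (fun k =>
        1 + Real.cos ((2 * (k.1 : ℝ) + 1) * Real.pi / (2 * m)) +
          Complex.I * Real.sin ((2 * (k.1 : ℝ) + 1) * Real.pi / (2 * m))) =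
    (1 / (2 * m)) *
      (Complex.Gamma ((a : ℂ) / (2 * m)) * Complex.Gamma (2 * m * (b : ℂ)) *
        Complex.Gamma ((2 * m * (b : ℂ) - a) / (2 * m))) /
      (Complex.Gamma (a : ℂ) * Complex.Gamma (b : ℂ) * Complex.Gamma (2 * m * (b : ℂ) - a)) :=
  lauricella_even_value_general m a b ha hab
end

section
/- Let m ≥ 2 be an integer, put n = 2m−1, and let a, b be real numbers with a > 0, b > 0 and nb > a. For k = 1, …, n with k ≠ m, set y_k = 1 + cos((2k−1)π/n) + i·sin((2k−1)π/n). Then the Lauricella function of the n−1 = 2m−2 arguments y_1, …, y_{m−1}, y_{m+1}, …, y_n satisfies F_D^{(2m−2)}(nb−a; b, …, b; nb | y_1, …, y_{m−1}, y_{m+1}, …, y_n) = (1/n) · Γ(a/n)·Γ(nb)·Γ((nb−a)/n) / (Γ(a)·Γ(b)·Γ(nb−a)). -/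
open MeasureTheory

/-!
For `n = 2m - 1` the numbers `1 - y_k u`, `k ≠ m`, are the factors `(1 - u) - ζ u`, `ζ ^ n = -1`,
`ζ ≠ -1`, of `(1 - u) ^ n + u ^ n`. They come in complex-conjugate pairs, so the product of their
principal powers `(·) ^ (-b)` is the real power `((1 - u) ^ n + u ^ n) ^ (-b)`. The Euler integral
becomes `∫₀¹ u ^ (nb - a - 1) (1 - u) ^ (a - 1) (u ^ n + (1 - u) ^ n) ^ (-b) du`, and the substitution
`w = u ^ n / (u ^ n + (1 - u) ^ n)` turns it into `B(b - a/n, a/n) / n`.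
-/

open Complex ComplexConjugate Finset

noncomputable def negOneRoot (n k : ℕ) : ℂ := exp (((2 * k - 1) * Real.pi / n : ℝ) * I)

lemma one_add_cos_add_I_mul_sin (n k : ℕ) :
    1 + (Real.cos ((2 * k - 1) * Real.pi / n) : ℂ) + I * Real.sin ((2 * k - 1) * Real.pi / n) =
      1 + negOneRoot n k := by
  rw [negOneRoot, exp_mul_I, ← ofReal_cos, ← ofReal_sin]
  ring

lemma prod_range_sub_negOneRoot_mul {n : ℕ} (hn : n ≠ 0) (x y : ℂ) :
    ∏ k ∈ range n, (x - negOneRoot n (k + 1) * y) = x ^ n + y ^ n := by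
  have hα : (exp (Real.pi * I / n) * y) ^ n = -y ^ n := by
    rw [mul_pow, ← exp_nat_mul, mul_div_cancel₀ _ (Nat.cast_ne_zero.mpr hn), exp_pi_mul_I]
    ring
  have := congrArg (Polynomial.eval x)
    (X_pow_sub_C_eq_prod (isPrimitiveRoot_exp n hn) (Nat.pos_of_ne_zero hn) hα)
  simp only [Polynomial.eval_sub, Polynomial.eval_pow, Polynomial.eval_X, Polynomial.eval_C,
    Polynomial.eval_prod, sub_neg_eq_add] at this
  rw [this]
  refine prod_congr rfl fun k _ => ?_
  rw [negOneRoot, ← exp_nat_mul, ← mul_assoc, ← exp_add]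
  congr 3
  push_cast
  ring

lemma conj_negOneRoot {n k : ℕ} (hn : n ≠ 0) (hk : k ≤ n + 1) :
    conj (negOneRoot n k) = negOneRoot n (n + 1 - k) := by
  have hθ : ((2 * (n + 1 - k : ℕ) - 1) * Real.pi / n : ℝ) =
      2 * Real.pi - (2 * k - 1) * Real.pi / n := by
    rw [Nat.cast_sub hk]
    field_simp
    push_cast
    ring
  set θ : ℝ := (2 * k - 1) * Real.pi / n
  rw [negOneRoot, negOneRoot, hθ, ← exp_conj, map_mul, conj_ofReal, conj_I,
    show ((2 * Real.pi - θ : ℝ) : ℂ) * I = θ * -I + 2 * Real.pi * I by push_cast; ring,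
    exp_add, exp_two_pi_mul_I, mul_one]

lemma negOneRoot_two_mul_sub_one_self {m : ℕ} (hm : 1 ≤ m) : negOneRoot (2 * m - 1) m = -1 := by
  have hN : ((2 * m - 1 : ℕ) : ℝ) = 2 * m - 1 := by
    push_cast [Nat.cast_sub (by omega : 1 ≤ 2 * m)]
    ring
  have hN0 : (2 * m - 1 : ℝ) ≠ 0 := by rw [← hN]; exact_mod_cast (by omega : 2 * m - 1 ≠ 0)
  unfold negOneRoot
  rw [hN, mul_div_cancel_left₀ _ hN0, exp_pi_mul_I]

lemma im_negOneRoot_pos {n k : ℕ} (hk : 1 ≤ k) (hkn : 2 * k ≤ n) : 0 < (negOneRoot n k).im := by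
  rw [negOneRoot, exp_ofReal_mul_I_im]
  have hk' : (1 : ℝ) ≤ k := by exact_mod_cast hk
  have hkn' : (2 * k : ℝ) ≤ n := by exact_mod_cast hkn
  apply Real.sin_pos_of_pos_of_lt_pi
  · apply div_pos (by nlinarith [Real.pi_pos]) (by linarith)
  · rw [div_lt_iff₀ (by linarith)]
    nlinarith [Real.pi_pos]

lemma cpow_ofReal_mul_conj_cpow {v : ℂ} (hv : v.arg ≠ Real.pi) (s : ℝ) :
    v ^ (s : ℂ) * conj v ^ (s : ℂ) = (normSq v ^ s : ℝ) := by
  rw [conj_cpow _ _ hv, conj_ofReal, mul_conj, normSq_eq_norm_sq, normSq_eq_norm_sq,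
    norm_cpow_real, ← Real.rpow_natCast, ← Real.rpow_natCast, ← Real.rpow_mul (norm_nonneg v),
    ← Real.rpow_mul (norm_nonneg v), mul_comm]

section Reindexing

variable {M : Type*} [CommMonoid M] (f : ℕ → M)

lemma prod_range_mul_prod_range_reflect (m : ℕ) :
    (∏ k ∈ range (m - 1), f (k + 1)) * ∏ k ∈ range (m - 1), f (m + 1 + k) =
      ∏ k ∈ range (m - 1), f (k + 1) * f (2 * m - 1 - k) := by
  rw [prod_mul_distrib, ← prod_range_reflect (fun k => f (m + 1 + k))]
  refine congrArg _ (prod_congr rfl fun k hk => ?_)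
  rw [mem_range] at hk
  congr 1
  omega

lemma prod_fin_skip_eq_prod_range_pairs (m : ℕ) :
    ∏ j : Fin (2 * m - 2), f (if j.1 + 1 < m then j.1 + 1 else j.1 + 2) =
      ∏ k ∈ range (m - 1), f (k + 1) * f (2 * m - 1 - k) := by
  rw [Fin.prod_univ_eq_prod_range (fun j => f (if j + 1 < m then j + 1 else j + 2)),
    show 2 * m - 2 = (m - 1) + (m - 1) by omega, prod_range_add,
    ← prod_range_mul_prod_range_reflect]
  congr 1
  · exact prod_congr rfl fun k hk => by rw [if_pos (by simp at hk; omega)]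
  · refine prod_congr rfl fun k hk => ?_
    rw [mem_range] at hk
    rw [if_neg (by omega)]
    congr 1
    omega

lemma prod_range_eq_mul_prod_range_pairs {m : ℕ} (hm : 1 ≤ m) :
    ∏ k ∈ range (2 * m - 1), f (k + 1) =
      f m * ∏ k ∈ range (m - 1), f (k + 1) * f (2 * m - 1 - k) := by
  rw [← prod_range_mul_prod_range_reflect]
  conv_lhs => rw [show 2 * m - 1 = (m - 1 + 1) + (m - 1) by omega, prod_range_add, prod_range_succ,
    Nat.sub_add_cancel hm]
  simp only [add_right_comm m]
  ac_rfl

end Reindexing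

section RootsOfNegOne

variable {m : ℕ}

lemma conj_one_sub_one_add_negOneRoot_mul (u : ℝ) {k : ℕ} (hk : k < m - 1) :
    conj (1 - (1 + negOneRoot (2 * m - 1) (k + 1)) * u) =
      1 - (1 + negOneRoot (2 * m - 1) (2 * m - 1 - k)) * u := by
  rw [map_sub, map_mul, map_add, map_one, conj_ofReal, conj_negOneRoot (by omega) (by omega),
    show 2 * m - 1 + 1 - (k + 1) = 2 * m - 1 - k by omega]

lemma prod_range_normSq_one_sub_one_add_negOneRoot_mul (hm : 1 ≤ m) (u : ℝ) :
    ∏ k ∈ range (m - 1), normSq (1 - (1 + negOneRoot (2 * m - 1) (k + 1)) * u) =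
      (1 - u) ^ (2 * m - 1) + u ^ (2 * m - 1) := by
  apply ofReal_injective
  have hF : ∀ k ∈ range (m - 1), (normSq (1 - (1 + negOneRoot (2 * m - 1) (k + 1)) * u) : ℂ) =
      (1 - (1 + negOneRoot (2 * m - 1) (k + 1)) * u) *
        (1 - (1 + negOneRoot (2 * m - 1) (2 * m - 1 - k)) * u) := fun k hk => by
    rw [← conj_one_sub_one_add_negOneRoot_mul u (mem_range.mp hk), mul_conj]
  have hmiddle : 1 - (1 + negOneRoot (2 * m - 1) m) * u = 1 := by
    rw [negOneRoot_two_mul_sub_one_self hm]; ring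
  push_cast
  calc ∏ k ∈ range (m - 1), (normSq (1 - (1 + negOneRoot (2 * m - 1) (k + 1)) * u) : ℂ)
      = (1 - (1 + negOneRoot (2 * m - 1) m) * u) * ∏ k ∈ range (m - 1),
          (1 - (1 + negOneRoot (2 * m - 1) (k + 1)) * u) *
            (1 - (1 + negOneRoot (2 * m - 1) (2 * m - 1 - k)) * u) := by
        rw [prod_congr rfl hF, hmiddle, one_mul]
    _ = ∏ k ∈ range (2 * m - 1), ((1 - u) - negOneRoot (2 * m - 1) (k + 1) * u) := by
        rw [← prod_range_eq_mul_prod_range_pairs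
          (fun k => 1 - (1 + negOneRoot (2 * m - 1) k) * u) hm]
        exact prod_congr rfl fun k _ => by ring
    _ = _ := prod_range_sub_negOneRoot_mul (by omega) _ _

lemma prod_fin_skip_one_sub_one_add_negOneRoot_mul_cpow (hm : 1 ≤ m) {u : ℝ} (hu : 0 < u)
    (s : ℝ) :
    ∏ j : Fin (2 * m - 2), (1 - (1 + negOneRoot (2 * m - 1)
        (if j.1 + 1 < m then j.1 + 1 else j.1 + 2)) * u) ^ (s : ℂ) =
      (((1 - u) ^ (2 * m - 1) + u ^ (2 * m - 1)) ^ s : ℝ) := by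
  rw [prod_fin_skip_eq_prod_range_pairs
    (fun k => (1 - (1 + negOneRoot (2 * m - 1) k) * u) ^ (s : ℂ))]
  have hpair : ∀ k ∈ range (m - 1),
      (1 - (1 + negOneRoot (2 * m - 1) (k + 1)) * u) ^ (s : ℂ) *
        (1 - (1 + negOneRoot (2 * m - 1) (2 * m - 1 - k)) * u) ^ (s : ℂ) =
      (normSq (1 - (1 + negOneRoot (2 * m - 1) (k + 1)) * u) ^ s : ℝ) := fun k hk => by
    have hk := mem_range.mp hk
    have him : (1 - (1 + negOneRoot (2 * m - 1) (k + 1)) * u).im < 0 := by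
      simpa using mul_pos (im_negOneRoot_pos (by omega) (by omega : 2 * (k + 1) ≤ 2 * m - 1)) hu
    rw [← conj_one_sub_one_add_negOneRoot_mul u hk,
      cpow_ofReal_mul_conj_cpow (fun h => (arg_eq_pi_iff.mp h).2.not_lt him)]
  rw [prod_congr rfl hpair, ← ofReal_prod, Real.finsetProd_rpow _ _ (fun _ _ => normSq_nonneg _),
    prod_range_normSq_one_sub_one_add_negOneRoot_mul hm u]

end RootsOfNegOne

noncomputable def powRatio (n : ℕ) (u : ℝ) : ℝ := u ^ n / (u ^ n + (1 - u) ^ n)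

section PowRatio

variable {n : ℕ} {u : ℝ}

lemma pow_add_one_sub_pow_pos (n : ℕ) (hu : u ∈ Set.Ioo 0 1) : 0 < u ^ n + (1 - u) ^ n := by
  have := hu.1
  have := sub_pos.mpr hu.2
  positivity

lemma one_sub_powRatio (hu : u ∈ Set.Ioo 0 1) :
    1 - powRatio n u = (1 - u) ^ n / (u ^ n + (1 - u) ^ n) := by
  rw [powRatio, eq_div_iff (pow_add_one_sub_pow_pos n hu).ne', sub_mul,
    div_mul_cancel₀ _ (pow_add_one_sub_pow_pos n hu).ne']
  ring

lemma powRatio_mem_Ioo (n : ℕ) (hu : u ∈ Set.Ioo 0 1) : powRatio n u ∈ Set.Ioo 0 1 := by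
  have hD := pow_add_one_sub_pow_pos n hu
  refine ⟨div_pos (pow_pos hu.1 n) hD, sub_pos.mp ?_⟩
  rw [one_sub_powRatio hu]
  exact div_pos (pow_pos (sub_pos.mpr hu.2) n) hD

lemma hasDerivAt_powRatio (hn : n ≠ 0) (hu : u ∈ Set.Ioo 0 1) :
    HasDerivAt (powRatio n)
      (n * u ^ (n - 1) * (1 - u) ^ (n - 1) / (u ^ n + (1 - u) ^ n) ^ 2) u := by
  have hnum : HasDerivAt (fun x : ℝ => x ^ n) (n * u ^ (n - 1)) u := hasDerivAt_pow n u
  have hden : HasDerivAt (fun x : ℝ => x ^ n + (1 - x) ^ n)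
      (n * u ^ (n - 1) + n * (1 - u) ^ (n - 1) * (-1)) u :=
    hnum.add (((hasDerivAt_id u).const_sub 1).fun_pow n)
  refine (hnum.div hden (pow_add_one_sub_pow_pos n hu).ne').congr_deriv ?_
  obtain ⟨k, rfl⟩ := Nat.exists_eq_add_one_of_ne_zero hn
  rw [Nat.add_sub_cancel, pow_succ, pow_succ]
  ring

lemma injOn_powRatio (hn : n ≠ 0) : Set.InjOn (powRatio n) (Set.Ioo 0 1) := by
  intro x hx y hy h
  rw [powRatio, powRatio, div_eq_div_iff (pow_add_one_sub_pow_pos n hx).ne'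
    (pow_add_one_sub_pow_pos n hy).ne'] at h
  have hpow : (x * (1 - y)) ^ n = (y * (1 - x)) ^ n := by
    rw [mul_pow, mul_pow]
    linear_combination h
  have := (pow_left_inj₀ (mul_pos hx.1 (sub_pos.mpr hy.2)).le
    (mul_pos hy.1 (sub_pos.mpr hx.2)).le hn).mp hpow
  linarith

lemma powRatio_image_Ioo (hn : n ≠ 0) : powRatio n '' Set.Ioo 0 1 = Set.Ioo 0 1 := by
  refine (Set.mapsTo_iff_image_subset.mp fun u hu => powRatio_mem_Ioo n hu).antisymm ?_
  rintro w ⟨hw0, hw1⟩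
  set t : ℝ := (w / (1 - w)) ^ (n : ℝ)⁻¹
  have ht : 0 < t := Real.rpow_pos_of_pos (div_pos hw0 (sub_pos.mpr hw1)) _
  have htn : t ^ n = w / (1 - w) :=
    Real.rpow_inv_natCast_pow (div_pos hw0 (sub_pos.mpr hw1)).le hn
  refine ⟨t / (1 + t), ⟨by positivity, (div_lt_one (by positivity)).mpr (by linarith)⟩, ?_⟩
  have hw : 1 - w ≠ 0 := (sub_pos.mpr hw1).ne'
  show (t / (1 + t)) ^ n / ((t / (1 + t)) ^ n + (1 - t / (1 + t)) ^ n) = w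
  rw [show 1 - t / (1 + t) = 1 / (1 + t) by field_simp; ring, div_pow, div_pow,
    one_pow, htn]
  field_simp
  ring

lemma rpow_mul_rpow_mul_rpow_eq_deriv_mul (hn : n ≠ 0) (p q : ℝ) (hu : u ∈ Set.Ioo 0 1) :
    u ^ (n * p - 1) * (1 - u) ^ (n * q - 1) * (u ^ n + (1 - u) ^ n) ^ (-(p + q)) =
      |n * u ^ (n - 1) * (1 - u) ^ (n - 1) / (u ^ n + (1 - u) ^ n) ^ 2| *
        ((n : ℝ)⁻¹ * (powRatio n u ^ (p - 1) * (1 - powRatio n u) ^ (q - 1))) := by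
  have hu0 := hu.1
  have hu1 : 0 < 1 - u := sub_pos.mpr hu.2
  have hD := pow_add_one_sub_pow_pos n hu
  have hsplit : ∀ x : ℝ, 0 < x → ∀ r : ℝ, x ^ (n * r - 1) = x ^ (n - 1) * (x ^ n) ^ (r - 1) :=
    fun x hx r => by
      rw [← Real.rpow_natCast, ← Real.rpow_natCast_mul hx.le, ← Real.rpow_add hx]
      push_cast [Nat.one_le_iff_ne_zero.mpr hn]
      ring_nf
  have hDsplit : (u ^ n + (1 - u) ^ n) ^ (p + q) = (u ^ n + (1 - u) ^ n) ^ 2 *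
      ((u ^ n + (1 - u) ^ n) ^ (p - 1) * (u ^ n + (1 - u) ^ n) ^ (q - 1)) := by
    rw [← Real.rpow_add hD, ← Real.rpow_two, ← Real.rpow_add hD]
    ring_nf
  rw [abs_of_nonneg (by positivity), one_sub_powRatio hu, powRatio,
    Real.div_rpow (pow_nonneg hu0.le n) hD.le, Real.div_rpow (pow_nonneg hu1.le n) hD.le,
    hsplit u hu0, hsplit (1 - u) hu1, Real.rpow_neg hD.le, hDsplit]
  have : (n : ℝ) ≠ 0 := Nat.cast_ne_zero.mpr hn
  field_simp

lemma setIntegral_Ioo_rpow_mul_rpow_mul_rpow (hn : n ≠ 0) (p q : ℝ) :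
    ∫ u in Set.Ioo (0 : ℝ) 1,
        u ^ (n * p - 1) * (1 - u) ^ (n * q - 1) * (u ^ n + (1 - u) ^ n) ^ (-(p + q)) =
      (n : ℝ)⁻¹ * ∫ w in Set.Ioo (0 : ℝ) 1, w ^ (p - 1) * (1 - w) ^ (q - 1) := by
  conv_rhs => rw [← integral_const_mul, ← powRatio_image_Ioo hn,
    integral_image_eq_integral_abs_deriv_smul measurableSet_Ioo
      (fun u hu => (hasDerivAt_powRatio hn hu).hasDerivWithinAt) (injOn_powRatio hn)]
  exact setIntegral_congr_fun measurableSet_Ioo fun u hu =>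
    rpow_mul_rpow_mul_rpow_eq_deriv_mul hn p q hu

end PowRatio

lemma betaIntegral_ofReal (p q : ℝ) :
    betaIntegral p q = ((∫ w in Set.Ioo (0 : ℝ) 1, w ^ (p - 1) * (1 - w) ^ (q - 1) : ℝ) : ℂ) := by
  rw [← integral_Ioc_eq_integral_Ioo, ← intervalIntegral.integral_of_le zero_le_one,
    ← intervalIntegral.integral_ofReal, betaIntegral]
  refine intervalIntegral.integral_congr fun w hw => ?_
  rw [Set.uIcc_of_le zero_le_one] at hw
  push_cast [Complex.ofReal_cpow hw.1, Complex.ofReal_cpow (sub_nonneg.mpr hw.2)]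
  rfl

lemma intervalIntegral_cpow_mul_cpow_mul_rpow {n : ℕ} (hn : n ≠ 0) (p q : ℝ) :
    ∫ u in (0 : ℝ)..1, (u : ℂ) ^ ((n : ℂ) * p - 1) * (1 - (u : ℂ)) ^ ((n : ℂ) * q - 1) *
        (((u ^ n + (1 - u) ^ n) ^ (-(p + q)) : ℝ) : ℂ) =
      (n : ℂ)⁻¹ * betaIntegral p q := by
  calc _ = ((∫ u in Set.Ioo (0 : ℝ) 1,
        u ^ (n * p - 1) * (1 - u) ^ (n * q - 1) * (u ^ n + (1 - u) ^ n) ^ (-(p + q)) : ℝ) : ℂ) := by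
        rw [← integral_Ioc_eq_integral_Ioo, ← intervalIntegral.integral_of_le zero_le_one,
          ← intervalIntegral.integral_ofReal]
        refine intervalIntegral.integral_congr fun u hu => ?_
        rw [Set.uIcc_of_le zero_le_one] at hu
        push_cast [Complex.ofReal_cpow hu.1, Complex.ofReal_cpow (sub_nonneg.mpr hu.2)]
        rfl
    _ = _ := by
        rw [setIntegral_Ioo_rpow_mul_rpow_mul_rpow hn, betaIntegral_ofReal]
        push_cast
        rfl

lemma lauricellaFD_one_add_negOneRoot {m : ℕ} (hm : 1 ≤ m) (α γ : ℂ) (b : ℝ) :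
    lauricellaFD (2 * m - 2) α (fun _ => (b : ℂ)) γ
      (fun j =>
        let k : ℕ := if j.1 + 1 < m then j.1 + 1 else j.1 + 2
        1 + Real.cos ((2 * (k : ℝ) - 1) * Real.pi / ((2 * m - 1 : ℕ) : ℝ)) +
          Complex.I * Real.sin ((2 * (k : ℝ) - 1) * Real.pi / ((2 * m - 1 : ℕ) : ℝ))) =
    Gamma γ / (Gamma α * Gamma (γ - α)) *
      ∫ u in (0 : ℝ)..1, (u : ℂ) ^ (α - 1) * (1 - (u : ℂ)) ^ (γ - α - 1) *
        (((u ^ (2 * m - 1) + (1 - u) ^ (2 * m - 1)) ^ (-b) : ℝ) : ℂ) := by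
  rw [lauricellaFD]
  congr 1
  refine intervalIntegral.integral_congr_ae (Filter.Eventually.of_forall fun u hu => ?_)
  rw [Set.uIoc_of_le zero_le_one] at hu
  simp only [one_add_cos_add_I_mul_sin]
  rw [← ofReal_neg, prod_fin_skip_one_sub_one_add_negOneRoot_mul_cpow hm hu.1, add_comm (u ^ _)]

theorem lauricella_odd_value_general (m : ℕ) (a b : ℝ) (ha : 0 < a)
    (hab : a < ((2 * m - 1 : ℕ) : ℝ) * b) :
    lauricellaFD (2 * m - 2) (((2 * m - 1 : ℕ) : ℂ) * b - a) (fun _ => (b : ℂ))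
      (((2 * m - 1 : ℕ) : ℂ) * b)
      (fun j =>
        let k : ℕ := if j.1 + 1 < m then j.1 + 1 else j.1 + 2
        1 + Real.cos ((2 * (k : ℝ) - 1) * Real.pi / ((2 * m - 1 : ℕ) : ℝ)) +
          Complex.I * Real.sin ((2 * (k : ℝ) - 1) * Real.pi / ((2 * m - 1 : ℕ) : ℝ))) =
    (1 / ((2 * m - 1 : ℕ) : ℂ)) *
      (Complex.Gamma ((a : ℂ) / ((2 * m - 1 : ℕ) : ℂ)) *
        Complex.Gamma (((2 * m - 1 : ℕ) : ℂ) * b) *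
        Complex.Gamma ((((2 * m - 1 : ℕ) : ℂ) * b - a) / ((2 * m - 1 : ℕ) : ℂ))) /
      (Complex.Gamma (a : ℂ) * Complex.Gamma (b : ℂ) *
        Complex.Gamma (((2 * m - 1 : ℕ) : ℂ) * b - a)) := by
  have hN : 2 * m - 1 ≠ 0 := fun h => by
    rw [h, Nat.cast_zero, zero_mul] at hab
    linarith
  rw [lauricellaFD_one_add_negOneRoot (by omega)]
  set N := 2 * m - 1
  have hN0 : (0 : ℝ) < N := Nat.cast_pos.mpr (Nat.pos_of_ne_zero hN)
  obtain ⟨p, q, hp, hq, rfl, rfl⟩ : ∃ p q : ℝ, 0 < p ∧ 0 < q ∧ a = N * q ∧ b = p + q :=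
    ⟨b - a / N, a / N, by rw [sub_pos, div_lt_iff₀ hN0]; linarith, by positivity, by field_simp,
      by ring⟩
  have hΓ : ∀ s : ℂ, 0 < s.re → Gamma s ≠ 0 := fun s => Gamma_ne_zero_of_re_pos
  have hN' : (N : ℂ) ≠ 0 := Nat.cast_ne_zero.mpr hN
  push_cast
  rw [show (N : ℂ) * (p + q) - N * q = N * p by ring,
    show (N : ℂ) * (p + q) - N * p = N * q by ring,
    intervalIntegral_cpow_mul_cpow_mul_rpow hN,
    betaIntegral_eq_Gamma_mul_div _ _ (by simpa) (by simpa), mul_div_cancel_left₀ _ hN',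
    mul_div_cancel_left₀ _ hN']
  field_simp [hΓ (N * p) (by simpa using mul_pos hN0 hp), hΓ (N * q) (by simpa using ha),
    hΓ (p + q) (by simpa using add_pos hp hq)]

theorem lauricella_odd_value (m : ℕ) (hm : 2 ≤ m) (a b : ℝ) (ha : 0 < a) (hb : 0 < b)
    (hab : a < ((2 * m - 1 : ℕ) : ℝ) * b) :
    lauricellaFD (2 * m - 2) (((2 * m - 1 : ℕ) : ℂ) * b - a) (fun _ => (b : ℂ))
      (((2 * m - 1 : ℕ) : ℂ) * b)
      (fun j =>
        let k : ℕ := if j.1 + 1 < m then j.1 + 1 else j.1 + 2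
        1 + Real.cos ((2 * (k : ℝ) - 1) * Real.pi / ((2 * m - 1 : ℕ) : ℝ)) +
          Complex.I * Real.sin ((2 * (k : ℝ) - 1) * Real.pi / ((2 * m - 1 : ℕ) : ℝ))) =
    (1 / ((2 * m - 1 : ℕ) : ℂ)) *
      (Complex.Gamma ((a : ℂ) / ((2 * m - 1 : ℕ) : ℂ)) *
        Complex.Gamma (((2 * m - 1 : ℕ) : ℂ) * b) *
        Complex.Gamma ((((2 * m - 1 : ℕ) : ℂ) * b - a) / ((2 * m - 1 : ℕ) : ℂ))) /
      (Complex.Gamma (a : ℂ) * Complex.Gamma (b : ℂ) *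
        Complex.Gamma (((2 * m - 1 : ℕ) : ℂ) * b - a)) :=
  lauricella_odd_value_general m a b ha hab
end

section
/- Let m, n be real numbers with m > 0, n > 0 and 2n − m > 0, and let a, b > 0. Then ∫_1^∞ ((t^n + a)(t^n + b))^{−1/m} dt = (m/(2n−m)) · F_1((2n−m)/(mn); 1/m, 1/m; (2n−m+mn)/(mn) | −a, −b). -/
open MeasureTheory

/-!
Substituting `t = u ^ (-1/n)` maps `(1, ∞)` onto `(0, 1)` and turns `t ^ n + a` into
`(1 + a u) / u`, so the integral becomes `(1/n) ∫₀¹ u ^ (r - 1) (1 + a u) ^ (-1/m) (1 + b u) ^ (-1/m) du`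
with `r = (2n - m)/(mn) > 0`. This is the Euler integral of `F₁` with `c = r + 1`, for which the
Gamma prefactor reduces to `Γ(r + 1)/Γ(r) = r`.
-/

open Real Set

theorem integral_Ioi_one_eq_integral_Ioo_comp_rpow {E : Type*} [NormedAddCommGroup E]
    [NormedSpace ℝ E] (g : ℝ → E) {p : ℝ} (hp : p < 0) :
    ∫ t in Ioi 1, g t = ∫ u in Ioo 0 1, (|p| * u ^ (p - 1)) • g (u ^ p) := by
  have himage : (· ^ p) '' Ioo 0 1 = Ioi (1 : ℝ) := by
    ext t
    constructor
    · rintro ⟨u, ⟨hu0, hu1⟩, rfl⟩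
      exact one_lt_rpow_of_pos_of_lt_one_of_neg hu0 hu1 hp
    · intro ht
      have ht0 : (0 : ℝ) < t := one_pos.trans ht
      exact ⟨t ^ p⁻¹, ⟨rpow_pos_of_pos ht0 _, rpow_lt_one_of_one_lt_of_neg ht (inv_lt_zero.mpr hp)⟩,
        rpow_inv_rpow ht0.le hp.ne⟩
  rw [← himage, integral_image_eq_integral_abs_deriv_smul measurableSet_Ioo
    (fun u hu ↦ (hasDerivAt_rpow_const (Or.inl hu.1.ne')).hasDerivWithinAt)
    ((rpow_left_injOn hp.ne).mono fun u hu ↦ hu.1.le)]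
  refine setIntegral_congr_fun measurableSet_Ioo fun u hu ↦ ?_
  rw [abs_mul, abs_of_pos (rpow_pos_of_pos hu.1 _)]

theorem lauricellaFD_add_one (n : ℕ) {a : ℂ} (ha : 0 < a.re) (b x : Fin n → ℂ) :
    lauricellaFD n a b (a + 1) x =
      a * ∫ u in (0:ℝ)..1, (u : ℂ) ^ (a - 1) * ∏ k, ((1 : ℂ) - x k * u) ^ (-(b k)) := by
  have ha0 : a ≠ 0 := fun h ↦ by simp [h] at ha
  simp only [lauricellaFD, add_sub_cancel_left, sub_self, Complex.cpow_zero, mul_one,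
    Complex.Gamma_one, Complex.Gamma_add_one a ha0,
    mul_div_cancel_right₀ _ (Complex.Gamma_ne_zero_of_re_pos ha)]

theorem appellF1_add_one_neg_ofReal {r : ℝ} (hr : 0 < r) (β₁ β₂ : ℝ) {a b : ℝ}
    (ha : -1 ≤ a) (hb : -1 ≤ b) :
    appellF1 r β₁ β₂ ((r + 1 : ℝ) : ℂ) (-(a : ℂ)) (-(b : ℂ)) =
      r * ((∫ u in Ioo 0 1, u ^ (r - 1) * (1 + a * u) ^ (-β₁) * (1 + b * u) ^ (-β₂) : ℝ) : ℂ) := by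
  rw [appellF1, Complex.ofReal_add, Complex.ofReal_one,
    lauricellaFD_add_one 2 (by simpa using hr), ← integral_Ioc_eq_integral_Ioo,
    ← intervalIntegral.integral_of_le zero_le_one, ← intervalIntegral.integral_ofReal]
  congr 1
  refine intervalIntegral.integral_congr fun u hu ↦ ?_
  rw [uIcc_of_le zero_le_one] at hu
  have h1a : 0 ≤ 1 + a * u := by nlinarith [hu.1, hu.2]
  have h1b : 0 ≤ 1 + b * u := by nlinarith [hu.1, hu.2]
  simp only [Fin.prod_univ_two, Matrix.cons_val_zero, Matrix.cons_val_one,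
    Complex.ofReal_mul, Complex.ofReal_cpow hu.1, Complex.ofReal_cpow h1a,
    Complex.ofReal_cpow h1b]
  push_cast
  ring_nf

theorem rpow_neg_one_div_rpow_add {n u : ℝ} (hn : n ≠ 0) (hu : 0 < u) (a : ℝ) :
    (u ^ (-1 / n)) ^ n + a = (1 + a * u) / u := by
  rw [← rpow_mul hu.le, div_mul_cancel₀ _ hn, rpow_neg_one]
  field_simp

theorem goursat_integrand_eq {m n u : ℝ} (hm : m ≠ 0) (hn : 0 < n) (hu : 0 < u) {a b : ℝ}
    (ha : 0 ≤ a) (hb : 0 ≤ b) :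
    (|-1 / n| * u ^ (-1 / n - 1)) • (((u ^ (-1 / n)) ^ n + a) * ((u ^ (-1 / n)) ^ n + b)) ^ (-1 / m)
      = 1 / n * (u ^ ((2 * n - m) / (m * n) - 1) * (1 + a * u) ^ (-(1 / m))
          * (1 + b * u) ^ (-(1 / m))) := by
  have h1a : 0 ≤ 1 + a * u := by positivity
  have h1b : 0 ≤ 1 + b * u := by positivity
  have hexp : (-1 / n - 1) + 2 / m = (2 * n - m) / (m * n) - 1 := by
    field_simp
    ring
  rw [rpow_neg_one_div_rpow_add hn.ne' hu, rpow_neg_one_div_rpow_add hn.ne' hu,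
    div_mul_div_comm, div_rpow (mul_nonneg h1a h1b) (mul_nonneg hu.le hu.le),
    mul_rpow h1a h1b, ← sq, ← rpow_natCast, ← rpow_mul hu.le, ← hexp, rpow_add hu,
    show (2 : ℕ) * (-1 / m) = -(2 / m) by push_cast; ring, rpow_neg hu.le, div_inv_eq_mul,
    smul_eq_mul, abs_of_neg (div_neg_of_neg_of_pos (by norm_num) hn), neg_div, neg_neg]
  ring_nf

theorem goursat_lemma1 (m n : ℝ) (hm : 0 < m) (hn : 0 < n) (hmn : 0 < 2 * n - m)
    (a b : ℝ) (ha : 0 < a) (hb : 0 < b) :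
    ((∫ t in Set.Ioi (1:ℝ), ((t ^ n + a) * (t ^ n + b)) ^ (-1 / m) : ℝ) : ℂ) =
      ((m / (2 * n - m) : ℝ) : ℂ) *
        appellF1 (((2 * n - m) / (m * n) : ℝ) : ℂ) ((1 / m : ℝ) : ℂ) ((1 / m : ℝ) : ℂ)
          (((2 * n - m + m * n) / (m * n) : ℝ) : ℂ) (-(a : ℂ)) (-(b : ℂ)) := by
  have hr : 0 < (2 * n - m) / (m * n) := by positivity
  have hc : (2 * n - m + m * n) / (m * n) = (2 * n - m) / (m * n) + 1 := by
    field_simp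
  rw [hc, appellF1_add_one_neg_ofReal hr _ _ (by linarith) (by linarith),
    integral_Ioi_one_eq_integral_Ioo_comp_rpow _ (div_neg_of_neg_of_pos neg_one_lt_zero hn),
    setIntegral_congr_fun measurableSet_Ioo
      fun u hu ↦ goursat_integrand_eq hm.ne' hn hu.1 ha.le hb.le,
    integral_const_mul, ← mul_assoc]
  norm_cast
  congr 1
  rw [div_mul_div_cancel₀ hmn.ne', div_mul_cancel_left₀ hm.ne', one_div]
end

section
/- The Appell function satisfies F_1(1/3; 1/2, 1/2; 4/3 | −1/2, −1/8) = Γ(1/3)^3 / (√27 · 2^{1/3} · π). Equivalently, (1/3) ∫_0^1 u^{−2/3} ((1 + u/2)(1 + u/8))^{−1/2} du = Γ(1/3)^3 / (√27 · 2^{1/3} · π). -/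
/-!
The substitution `x = 27 u / (u + 2)^3` maps `[0, 1]` increasingly onto itself, with
`1 - x = (u + 8)(1 - u)^2 / (u + 2)^3` and `dx = 54 (1 - u) / (u + 2)^4 du`. It turns
`x^(-2/3) (1 - x)^(-1/2) dx` into `(3/2) u^(-2/3) ((1 + u/2)(1 + u/8))^(-1/2) du`, so the
integral is `(2/3) B(1/3, 1/2)`. The reflection formula at `1/3` and `1/6` and Legendre
duplication at `1/6` express `B(1/3, 1/2) = Γ(1/3) Γ(1/2) / Γ(5/6)` through `Γ(1/3)^3`.
Since `c = a + 1`, the factor `(1 - u)^(c - a - 1)` of the Euler integral disappears and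
`Γ(c) / (Γ(a) Γ(c - a)) = a`, so `F₁` is `1/3` of the same integral.
-/

open MeasureTheory

open Real Set ProbabilityTheory

theorem intervalIntegral_rpow_mul_one_sub_rpow {α β : ℝ} (hα : 0 < α) (hβ : 0 < β) :
    ∫ x in (0:ℝ)..1, x ^ (α - 1) * (1 - x) ^ (β - 1) = beta α β := by
  have hcongr : Complex.betaIntegral α β =
      ∫ x in (0:ℝ)..1, ((x ^ (α - 1) * (1 - x) ^ (β - 1) : ℝ) : ℂ) := by
    refine intervalIntegral.integral_congr fun x hx => ?_
    rw [uIcc_of_le zero_le_one] at hx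
    push_cast [Complex.ofReal_cpow hx.1, Complex.ofReal_cpow (sub_nonneg.2 hx.2)]
    rfl
  rw [beta_eq_betaIntegralReal α β hα hβ, hcongr, intervalIntegral.integral_ofReal,
    Complex.ofReal_re]

theorem Real.Gamma_one_third_mul_Gamma_two_thirds :
    Gamma (1/3) * Gamma (2/3) = 2 * π / √3 := by
  rw [show (2/3 : ℝ) = 1 - 1/3 by norm_num, Gamma_mul_Gamma_one_sub, mul_one_div,
    sin_pi_div_three]
  field_simp

theorem Real.Gamma_one_sixth_mul_Gamma_five_sixths :
    Gamma (1/6) * Gamma (5/6) = 2 * π := by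
  rw [show (5/6 : ℝ) = 1 - 1/6 by norm_num, Gamma_mul_Gamma_one_sub, mul_one_div,
    sin_pi_div_six]
  ring

theorem Real.Gamma_one_sixth_mul_Gamma_two_thirds :
    Gamma (1/6) * Gamma (2/3) = 2 ^ (2/3 : ℝ) * √π * Gamma (1/3) := by
  have h := Gamma_mul_Gamma_add_half (1/6)
  norm_num at h
  rw [h]
  ring

theorem ProbabilityTheory.beta_one_third_one_half :
    beta (1/3) (1/2) = √3 * 2 ^ (2/3 : ℝ) * Gamma (1/3) ^ 3 / (4 * π) := by
  have hG13 : 0 < Gamma (1/3) := Gamma_pos_of_pos (by norm_num)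
  have hG16 : 0 < Gamma (1/6) := Gamma_pos_of_pos (by norm_num)
  have hG23 : 0 < Gamma (2/3) := Gamma_pos_of_pos (by norm_num)
  have h56 : Gamma (5/6) = 2 * π / Gamma (1/6) := by
    rw [eq_div_iff hG16.ne', mul_comm, Gamma_one_sixth_mul_Gamma_five_sixths]
  have h23 : Gamma (2/3) = 2 * π / (√3 * Gamma (1/3)) := by
    rw [eq_div_iff (by positivity), mul_comm √3, ← mul_assoc, mul_comm _ (Gamma _),
      Gamma_one_third_mul_Gamma_two_thirds, div_mul_cancel₀ _ (by positivity)]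
  have h16 : Gamma (1/6) = 2 ^ (2/3 : ℝ) * √π * Gamma (1/3) / Gamma (2/3) := by
    rw [eq_div_iff hG23.ne', Gamma_one_sixth_mul_Gamma_two_thirds]
  rw [beta, Gamma_one_half_eq, show (1/3 + 1/2 : ℝ) = 5/6 by norm_num, h56, h16, h23]
  field_simp
  rw [sq_sqrt pi_pos.le]
  ring

noncomputable def goursatMap (u : ℝ) : ℝ := 27 * u / (u + 2) ^ 3

theorem goursatMap_zero : goursatMap 0 = 0 := by norm_num [goursatMap]

theorem goursatMap_one : goursatMap 1 = 1 := by norm_num [goursatMap]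

theorem hasDerivAt_goursatMap {u : ℝ} (hu : u + 2 ≠ 0) :
    HasDerivAt goursatMap (54 * (1 - u) / (u + 2) ^ 4) u := by
  have h := ((hasDerivAt_id u).const_mul 27).div (((hasDerivAt_id u).add_const 2).pow 3)
    (pow_ne_zero 3 hu)
  refine h.congr_deriv ?_
  simp only [id, Pi.pow_apply]
  field_simp
  ring

theorem one_sub_goursatMap {u : ℝ} (hu : u + 2 ≠ 0) :
    1 - goursatMap u = (u + 8) * (1 - u) ^ 2 / (u + 2) ^ 3 := by
  rw [goursatMap]
  field_simp
  ring

theorem goursatMap_rpow_jacobian {u : ℝ} (hu : u ∈ Ioo (0:ℝ) 1) :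
    goursatMap u ^ ((1:ℝ)/3 - 1) * (1 - goursatMap u) ^ ((1:ℝ)/2 - 1) *
        (54 * (1 - u) / (u + 2) ^ 4) =
      3/2 * (u ^ (-(2:ℝ)/3) * ((1 + u/2) * (1 + u/8)) ^ (-(1:ℝ)/2)) := by
  obtain ⟨hu0, hu1⟩ := hu
  have h2 : 0 < u + 2 := by linarith
  have h8 : 0 < u + 8 := by linarith
  have h1 : 0 < 1 - u := by linarith
  have hφ : goursatMap u ^ ((1:ℝ)/3 - 1) = u ^ (-(2:ℝ)/3) * (u + 2) ^ 2 / 9 := by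
    rw [goursatMap, div_rpow (by positivity) (by positivity), mul_rpow (by norm_num) hu0.le,
      ← rpow_natCast_mul h2.le, show (27:ℝ) = 3 ^ (3:ℕ) by norm_num,
      ← rpow_natCast_mul (by norm_num)]
    norm_num
    ring
  have h1φ : (1 - goursatMap u) ^ ((1:ℝ)/2 - 1) =
      (u + 8) ^ (-(1:ℝ)/2) * (u + 2) ^ 2 / ((1 - u) * (u + 2) ^ ((1:ℝ)/2)) := by
    rw [one_sub_goursatMap h2.ne', div_rpow (by positivity) (by positivity),
      mul_rpow h8.le (by positivity), ← rpow_natCast_mul h1.le, ← rpow_natCast_mul h2.le]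
    norm_num
    rw [rpow_neg_one, rpow_neg h2.le, show (3/2:ℝ) = 2 - 1/2 by norm_num, rpow_sub h2, rpow_two]
    field_simp
  have hprod : ((1 + u/2) * (1 + u/8)) ^ (-(1:ℝ)/2) =
      4 * (u + 8) ^ (-(1:ℝ)/2) / (u + 2) ^ ((1:ℝ)/2) := by
    rw [show (1 + u/2) * (1 + u/8) = (u + 2) * (u + 8) / 4 ^ 2 by ring,
      div_rpow (by positivity) (by positivity), mul_rpow h2.le h8.le,
      ← rpow_natCast_mul (by norm_num)]
    norm_num
    rw [rpow_neg h2.le]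
    field_simp
  rw [hφ, h1φ, hprod]
  field_simp
  ring

theorem integral_goursat_eq_beta :
    ∫ u in (0:ℝ)..1, u ^ (-(2:ℝ)/3) * ((1 + u/2) * (1 + u/8)) ^ (-(1:ℝ)/2) =
      2/3 * beta (1/3) (1/2) := by
  set g : ℝ → ℝ := fun x => x ^ ((1:ℝ)/3 - 1) * (1 - x) ^ ((1:ℝ)/2 - 1)
  have hderiv : ∀ u ∈ Ioo (0:ℝ) 1, HasDerivAt goursatMap (54 * (1 - u) / (u + 2) ^ 4) u :=
    fun u hu => hasDerivAt_goursatMap (by linarith [hu.1])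
  have hderiv_nonneg : ∀ u ∈ Ioo (0:ℝ) 1, 0 ≤ 54 * (1 - u) / (u + 2) ^ 4 := by
    intro u hu
    have : 0 < 1 - u := by linarith [hu.2]
    have : 0 < u + 2 := by linarith [hu.1]
    positivity
  have hcont : ContinuousOn goursatMap (uIcc 0 1) := by
    intro u hu
    rw [uIcc_of_le zero_le_one] at hu
    exact (hasDerivAt_goursatMap (by linarith [hu.1])).continuousAt.continuousWithinAt
  have hsubst : ∫ u in (0:ℝ)..1, (g ∘ goursatMap) u * (54 * (1 - u) / (u + 2) ^ 4) =
      beta (1/3) (1/2) := by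
    rw [intervalIntegral.integral_comp_mul_deriv_of_deriv_nonneg hcont
      (by simpa only [zero_le_one, min_eq_left, max_eq_right] using hderiv)
      (by simpa only [zero_le_one, min_eq_left, max_eq_right] using hderiv_nonneg),
      goursatMap_zero, goursatMap_one]
    exact intervalIntegral_rpow_mul_one_sub_rpow (by norm_num) (by norm_num)
  have hjac : ∫ u in (0:ℝ)..1, (g ∘ goursatMap) u * (54 * (1 - u) / (u + 2) ^ 4) =
      3/2 * ∫ u in (0:ℝ)..1, u ^ (-(2:ℝ)/3) * ((1 + u/2) * (1 + u/8)) ^ (-(1:ℝ)/2) := by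
    rw [← intervalIntegral.integral_const_mul]
    refine intervalIntegral.integral_congr_ae ?_
    filter_upwards [Measure.ae_ne volume 1] with u hu1 hu
    rw [uIoc_of_le zero_le_one] at hu
    exact goursatMap_rpow_jacobian ⟨hu.1, lt_of_le_of_ne hu.2 hu1⟩
  linarith

theorem appellF1_c_eq_a_add_one {a : ℂ} (ha : 0 < a.re) (b₁ b₂ x₁ x₂ : ℂ) :
    appellF1 a b₁ b₂ (a + 1) x₁ x₂ =
      a * ∫ u in (0:ℝ)..1,
        (u : ℂ) ^ (a - 1) * ((1 - x₁ * u) ^ (-b₁) * (1 - x₂ * u) ^ (-b₂)) := by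
  have ha0 : a ≠ 0 := fun h => by simp [h] at ha
  rw [appellF1, lauricellaFD, add_sub_cancel_left, Complex.Gamma_one, mul_one,
    Complex.Gamma_add_one a ha0, mul_div_cancel_right₀ _ (Complex.Gamma_ne_zero_of_re_pos ha)]
  congr 1
  refine intervalIntegral.integral_congr fun u _ => ?_
  simp [Fin.prod_univ_two]

theorem ofReal_goursat_integrand {u : ℝ} (hu : 0 ≤ u) :
    ((u ^ (-(2:ℝ)/3) * ((1 + u/2) * (1 + u/8)) ^ (-(1:ℝ)/2) : ℝ) : ℂ) =
      (u : ℂ) ^ ((1/3 : ℂ) - 1) *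
        ((1 - -(1/2) * u) ^ (-(1/2 : ℂ)) * (1 - -(1/8) * u) ^ (-(1/2 : ℂ))) := by
  have h2 : 0 ≤ 1 + u/2 := by linarith
  have h8 : 0 ≤ 1 + u/8 := by linarith
  rw [mul_rpow h2 h8]
  push_cast [Complex.ofReal_cpow hu, Complex.ofReal_cpow h2, Complex.ofReal_cpow h8]
  ring_nf

theorem appell_value_goursat' :
    appellF1 (1/3) (1/2) (1/2) (4/3) (-(1/2)) (-(1/8)) =
      ((Real.Gamma (1/3) ^ 3 / (Real.sqrt 27 * (2:ℝ) ^ ((1:ℝ)/3) * Real.pi) : ℝ) : ℂ) ∧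
    (1/3) * ∫ u in (0:ℝ)..1, u ^ (-(2:ℝ)/3) * ((1 + u/2) * (1 + u/8)) ^ (-(1:ℝ)/2) =
      Real.Gamma (1/3) ^ 3 / (Real.sqrt 27 * (2:ℝ) ^ ((1:ℝ)/3) * Real.pi) := by
  have hreal :
      (1/3) * ∫ u in (0:ℝ)..1, u ^ (-(2:ℝ)/3) * ((1 + u/2) * (1 + u/8)) ^ (-(1:ℝ)/2) =
      Real.Gamma (1/3) ^ 3 / (Real.sqrt 27 * (2:ℝ) ^ ((1:ℝ)/3) * Real.pi) := by
    have h27 : √27 = 3 * √3 := by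
      rw [show (27:ℝ) = 3 ^ 2 * 3 by norm_num, sqrt_mul (by norm_num), sqrt_sq (by norm_num)]
    have h2 : (2:ℝ) ^ (2/3 : ℝ) * 2 ^ (1/3 : ℝ) = 2 := by
      rw [← rpow_add two_pos]; norm_num
    rw [integral_goursat_eq_beta, beta_one_third_one_half, h27]
    field_simp
    rw [sq_sqrt (by norm_num), mul_assoc, h2]
    norm_num
  refine ⟨?_, hreal⟩
  rw [show (4/3 : ℂ) = 1/3 + 1 by norm_num, appellF1_c_eq_a_add_one (by norm_num), ← hreal,
    intervalIntegral.integral_congr fun u hu =>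
      (ofReal_goursat_integrand (by simpa using hu.1)).symm,
    intervalIntegral.integral_ofReal]
  push_cast
  ring
end

section
/- Define α = −3/8 − i√7/8, ω = 1/2 − i√3/2 and ε = 1/2 − i√7/2, and let ᾱ, ω̄, ε̄ denote their complex conjugates. Then F_D^{(6)}(2; 1/2, 1/2, 1/2, 1/2, 1/2, 1/2; 3 | −1, ω, ω̄, −2, ε, ε̄) = (2/3) · F_1(1; 1/2, 1/2; 3/2 | α, ᾱ). -/
open MeasureTheory

/-!
Pairing every argument with its complex conjugate makes both Euler integrands real: the
left-hand side is `2 ∫₀¹ u ((1 + u³)(1 + u + 4u³))^(-1/2) du` and the right-hand side is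
`(1/3) ∫₀¹ ((1 - v)(1 + 3v/4 + v²/4))^(-1/2) dv`. The substitution `v = (3u² - u³)/(1 + u³)`,
an increasing bijection of `(0, 1)`, turns the second integrand into six times the first.
-/

open Set Complex ComplexConjugate

theorem cpow_mul_conj_cpow {z : ℂ} (hz : z.arg ≠ Real.pi) (s : ℝ) :
    z ^ (s : ℂ) * conj z ^ (s : ℂ) = ((normSq z ^ s : ℝ) : ℂ) := by
  rw [conj_cpow z _ hz, conj_ofReal, mul_conj, normSq_eq_norm_sq, norm_cpow_real,
    normSq_eq_norm_sq, Real.rpow_pow_comm (norm_nonneg z)]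

theorem one_sub_mul_cpow_mul_conj {x : ℂ} {u : ℝ} (hxu : x.re * u < 1) (s : ℝ) :
    (1 - x * u) ^ (s : ℂ) * (1 - conj x * u) ^ (s : ℂ) =
      (((1 - 2 * x.re * u + normSq x * u ^ 2) ^ s : ℝ) : ℂ) := by
  have harg : (1 - x * u).arg ≠ Real.pi := by
    rw [Ne, arg_eq_pi_iff]
    simp only [sub_re, one_re, mul_re, ofReal_re, ofReal_im]
    intro h
    linarith [h.1]
  have hconj : conj (1 - x * u) = 1 - conj x * u := by simp
  rw [← hconj, cpow_mul_conj_cpow harg]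
  congr 3
  simp only [normSq_apply, sub_re, one_re, mul_re, ofReal_re, ofReal_im, sub_im, one_im, mul_im]
  ring

theorem mul_rpow_neg_half_eq_of_sq_mul_eq {p q P Q : ℝ} (hp : 0 ≤ p) (hq : 0 ≤ q) (hP : 0 < P)
    (hQ : 0 < Q) (h : p ^ 2 * Q = q ^ 2 * P) :
    p * P ^ (-(1 / 2) : ℝ) = q * Q ^ (-(1 / 2) : ℝ) := by
  have hsq : ∀ {R : ℝ}, 0 < R → (R ^ (-(1 / 2) : ℝ)) ^ 2 = R⁻¹ := fun hR => by
    rw [← Real.rpow_natCast, ← Real.rpow_mul hR.le]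
    norm_num [Real.rpow_neg_one]
  refine (sq_eq_sq₀ (by positivity) (by positivity)).mp ?_
  rw [mul_pow, mul_pow, hsq hP, hsq hQ]
  field_simp
  linarith

noncomputable def sexticIntegrand (u : ℝ) : ℝ :=
  u * ((1 + u ^ 3) * (1 + u + 4 * u ^ 3)) ^ (-(1 / 2) : ℝ)

noncomputable def cubicIntegrand (v : ℝ) : ℝ :=
  ((1 - v) * (1 + 3 / 4 * v + 1 / 4 * v ^ 2)) ^ (-(1 / 2) : ℝ)

theorem sexticIntegrand_eq_mul_rpow {u : ℝ} (hu : 0 ≤ u) :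
    sexticIntegrand u = u * ((1 + u) ^ (-(1 / 2) : ℝ) * (1 + 2 * u) ^ (-(1 / 2) : ℝ) *
      ((1 - u + u ^ 2) ^ (-(1 / 2) : ℝ) * (1 - u + 2 * u ^ 2) ^ (-(1 / 2) : ℝ))) := by
  have h₁ : 0 ≤ 1 - u + u ^ 2 := by nlinarith
  have h₂ : 0 ≤ 1 - u + 2 * u ^ 2 := by nlinarith
  rw [sexticIntegrand, ← Real.mul_rpow (by positivity) (by positivity), ← Real.mul_rpow h₁ h₂,
    ← Real.mul_rpow (by positivity) (by positivity)]
  ring_nf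

theorem cubicIntegrand_eq_mul_rpow {v : ℝ} (hv : v ≤ 1) :
    cubicIntegrand v = (1 - v) ^ (-(1 / 2) : ℝ) * (1 + 3 / 4 * v + 1 / 4 * v ^ 2) ^ (-(1 / 2) : ℝ) :=
  Real.mul_rpow (by linarith) (by nlinarith [sq_nonneg (v + 3 / 2)])

noncomputable def cubicSubst (u : ℝ) : ℝ := (3 * u ^ 2 - u ^ 3) / (1 + u ^ 3)

namespace cubicSubst

variable {u : ℝ}

theorem hasDerivAt (hu : 1 + u ^ 3 ≠ 0) :
    HasDerivAt cubicSubst (3 * u * (1 - u) * (2 + u + u ^ 2) / (1 + u ^ 3) ^ 2) u := by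
  have hnum := ((hasDerivAt_pow 2 u).const_mul (3 : ℝ)).sub (hasDerivAt_pow 3 u)
  have hden := (hasDerivAt_pow 3 u).const_add (1 : ℝ)
  refine (hnum.div hden hu).congr_deriv ?_
  simp only [Pi.sub_apply]
  field_simp
  ring

theorem one_sub (hu : 1 + u ^ 3 ≠ 0) :
    1 - cubicSubst u = (1 - u) ^ 2 * (1 + 2 * u) / (1 + u ^ 3) := by
  unfold cubicSubst
  field_simp
  ring

theorem quadratic (hu : 1 + u ^ 3 ≠ 0) :
    1 + 3 / 4 * cubicSubst u + 1 / 4 * cubicSubst u ^ 2 =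
      (2 + u + u ^ 2) ^ 2 * (1 - u + 2 * u ^ 2) / (4 * (1 + u ^ 3) ^ 2) := by
  unfold cubicSubst
  field_simp
  ring

theorem continuousOn : ContinuousOn cubicSubst (Ici 0) := fun u hu =>
  (hasDerivAt (by have : (0 : ℝ) ≤ u := hu; positivity)).continuousAt.continuousWithinAt

theorem strictMonoOn : StrictMonoOn cubicSubst (Icc 0 1) := by
  refine strictMonoOn_of_deriv_pos (convex_Icc 0 1) (continuousOn.mono Icc_subset_Ici_self)
    fun u hu => ?_
  rw [interior_Icc] at hu
  obtain ⟨hu0, hu1⟩ := hu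
  have : 0 < 1 - u := by linarith
  rw [(hasDerivAt (by positivity)).deriv]
  positivity

theorem image_Ioo : cubicSubst '' Ioo 0 1 = Ioo 0 1 := by
  have h0 : cubicSubst 0 = 0 := by norm_num [cubicSubst]
  have h1 : cubicSubst 1 = 1 := by norm_num [cubicSubst]
  refine Subset.antisymm ?_ ?_
  · rintro _ ⟨u, hu, rfl⟩
    exact ⟨h0 ▸ strictMonoOn ⟨le_rfl, zero_le_one⟩ (Ioo_subset_Icc_self hu) hu.1,
      h1 ▸ strictMonoOn (Ioo_subset_Icc_self hu) ⟨zero_le_one, le_rfl⟩ hu.2⟩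
  · simpa [h0, h1] using
      intermediate_value_Ioo zero_le_one (continuousOn.mono Icc_subset_Ici_self)

end cubicSubst

theorem cubicSubst_deriv_mul_cubicIntegrand {u : ℝ} (hu0 : 0 ≤ u) (hu1 : u < 1) :
    3 * u * (1 - u) * (2 + u + u ^ 2) / (1 + u ^ 3) ^ 2 * cubicIntegrand (cubicSubst u) =
      6 * sexticIntegrand u := by
  have hden : 0 < 1 + u ^ 3 := by positivity
  have h1u : 0 < 1 - u := by linarith
  rw [sexticIntegrand, cubicIntegrand, ← mul_assoc]
  refine mul_rpow_neg_half_eq_of_sq_mul_eq (by positivity) (by positivity) ?_ (by positivity) ?_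
  · rw [cubicSubst.one_sub hden.ne', cubicSubst.quadratic hden.ne']
    positivity
  · rw [cubicSubst.one_sub hden.ne', cubicSubst.quadratic hden.ne']
    field_simp
    ring

theorem integral_cubicIntegrand :
    ∫ v in (0 : ℝ)..1, cubicIntegrand v = 6 * ∫ u in (0 : ℝ)..1, sexticIntegrand u := by
  simp only [intervalIntegral.integral_of_le zero_le_one, integral_Ioc_eq_integral_Ioo]
  calc ∫ v in Ioo 0 1, cubicIntegrand v
      = ∫ v in cubicSubst '' Ioo 0 1, cubicIntegrand v := by rw [cubicSubst.image_Ioo]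
    _ = ∫ u in Ioo 0 1, |3 * u * (1 - u) * (2 + u + u ^ 2) / (1 + u ^ 3) ^ 2| •
          cubicIntegrand (cubicSubst u) :=
        integral_image_eq_integral_abs_deriv_smul measurableSet_Ioo
          (fun u hu => (cubicSubst.hasDerivAt (by have := hu.1; positivity)).hasDerivWithinAt)
          (cubicSubst.strictMonoOn.injOn.mono Ioo_subset_Icc_self) _
    _ = ∫ u in Ioo 0 1, 6 * sexticIntegrand u := by
        refine setIntegral_congr_fun measurableSet_Ioo fun u ⟨hu0, hu1⟩ => ?_
        have : 0 < 1 - u := by linarith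
        rw [smul_eq_mul, abs_of_nonneg (by positivity),
          cubicSubst_deriv_mul_cubicIntegrand hu0.le hu1]
    _ = 6 * ∫ u in Ioo 0 1, sexticIntegrand u := integral_const_mul _ _

theorem lauricellaIntegrand_eq {u : ℝ} (hu0 : 0 ≤ u) (hu1 : u ≤ 1) :
    (u : ℂ) ^ ((2 : ℂ) - 1) * (1 - (u : ℂ)) ^ ((3 : ℂ) - 2 - 1) *
      ∏ k, (1 - ![-1, 1/2 - I * Real.sqrt 3 / 2, 1/2 + I * Real.sqrt 3 / 2,
        -2, 1/2 - I * Real.sqrt 7 / 2, 1/2 + I * Real.sqrt 7 / 2] k * u) ^ (-(1 / 2 : ℂ)) =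
      (sexticIntegrand u : ℂ) := by
  have hω : conj (1/2 - I * Real.sqrt 3 / 2) = 1/2 + I * Real.sqrt 3 / 2 := by
    simp [map_ofNat]; ring
  have hε : conj (1/2 - I * Real.sqrt 7 / 2) = 1/2 + I * Real.sqrt 7 / 2 := by
    simp [map_ofNat]; ring
  have hω₁ : (1/2 - I * Real.sqrt 3 / 2 : ℂ).re = 1/2 := by simp
  have hω₂ : normSq (1/2 - I * Real.sqrt 3 / 2 : ℂ) = 1 := by
    simp [normSq_apply]; ring_nf; norm_num
  have hε₁ : (1/2 - I * Real.sqrt 7 / 2 : ℂ).re = 1/2 := by simp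
  have hε₂ : normSq (1/2 - I * Real.sqrt 7 / 2 : ℂ) = 2 := by
    simp [normSq_apply]; ring_nf; norm_num
  have hs : -(1 / 2 : ℂ) = ((-(1 / 2) : ℝ) : ℂ) := by push_cast; rfl
  have hregroup : ∀ a b c d e f : ℂ, a * b * c * d * e * f = a * d * ((b * c) * (e * f)) := by
    intros; ring
  rw [show (2 : ℂ) - 1 = 1 by norm_num, show (3 : ℂ) - 2 - 1 = 0 by norm_num, cpow_one,
    cpow_zero, mul_one, Fin.prod_univ_six]
  simp only [Matrix.cons_val, hs, ← hω, ← hε]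
  rw [hregroup, one_sub_mul_cpow_mul_conj (by rw [hω₁]; linarith),
    one_sub_mul_cpow_mul_conj (by rw [hε₁]; linarith),
    show (1 : ℂ) - -1 * u = ((1 + u : ℝ) : ℂ) by push_cast; ring,
    show (1 : ℂ) - -2 * u = ((1 + 2 * u : ℝ) : ℂ) by push_cast; ring,
    ← ofReal_cpow (by linarith), ← ofReal_cpow (by linarith), sexticIntegrand_eq_mul_rpow hu0,
    hω₁, hω₂, hε₁, hε₂]
  push_cast
  ring_nf

theorem appellIntegrand_eq {u : ℝ} (hu0 : 0 ≤ u) (hu1 : u ≤ 1) :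
    (u : ℂ) ^ ((1 : ℂ) - 1) * (1 - (u : ℂ)) ^ ((3 / 2 : ℂ) - 1 - 1) *
      ∏ k, (1 - ![-3/8 - I * Real.sqrt 7 / 8, -3/8 + I * Real.sqrt 7 / 8] k * u) ^
        (-(![1/2, 1/2] : Fin 2 → ℂ) k) =
      (cubicIntegrand u : ℂ) := by
  have hα : conj (-3/8 - I * Real.sqrt 7 / 8) = -3/8 + I * Real.sqrt 7 / 8 := by
    simp [map_ofNat]; ring
  have hα₁ : (-3/8 - I * Real.sqrt 7 / 8 : ℂ).re = -3/8 := by simp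
  have hα₂ : normSq (-3/8 - I * Real.sqrt 7 / 8 : ℂ) = 1/4 := by
    simp [normSq_apply]; ring_nf; norm_num
  have hs : -(1 / 2 : ℂ) = ((-(1 / 2) : ℝ) : ℂ) := by push_cast; rfl
  rw [show (1 : ℂ) - 1 = 0 by norm_num, show (3 / 2 : ℂ) - 1 - 1 = -(1 / 2) by norm_num,
    cpow_zero, one_mul, Fin.prod_univ_two]
  simp only [Matrix.cons_val_zero, Matrix.cons_val_one, hs, ← hα]
  rw [one_sub_mul_cpow_mul_conj (by rw [hα₁]; linarith), ← ofReal_one, ← ofReal_sub,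
    ← ofReal_cpow (by linarith), cubicIntegrand_eq_mul_rpow hu1, hα₁, hα₂]
  push_cast
  ring_nf

theorem lauricellaFD_six_eq :
    lauricellaFD 6 2 (fun _ => (1/2 : ℂ)) 3
      ![-1, 1/2 - Complex.I * Real.sqrt 3 / 2, 1/2 + Complex.I * Real.sqrt 3 / 2,
        -2, 1/2 - Complex.I * Real.sqrt 7 / 2, 1/2 + Complex.I * Real.sqrt 7 / 2] =
      2 * ((∫ u in (0 : ℝ)..1, sexticIntegrand u : ℝ) : ℂ) := by
  rw [lauricellaFD, ← intervalIntegral.integral_ofReal]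
  congr 1
  · norm_num
  · refine intervalIntegral.integral_congr fun u hu => ?_
    rw [uIcc_of_le zero_le_one] at hu
    exact lauricellaIntegrand_eq hu.1 hu.2

theorem appellF1_eq :
    appellF1 1 (1/2) (1/2) (3/2)
        (-3/8 - Complex.I * Real.sqrt 7 / 8) (-3/8 + Complex.I * Real.sqrt 7 / 8) =
      1 / 2 * ((∫ v in (0 : ℝ)..1, cubicIntegrand v : ℝ) : ℂ) := by
  have hΓ : Gamma (3 / 2) = 1 / 2 * Gamma (1 / 2) := by
    rw [← Gamma_add_one _ (by norm_num)]
    norm_num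
  have hΓ_ne : Gamma (1 / 2) ≠ 0 := Gamma_ne_zero_of_re_pos (by norm_num)
  rw [appellF1, lauricellaFD, ← intervalIntegral.integral_ofReal]
  congr 1
  · rw [show (3 / 2 : ℂ) - 1 = 1 / 2 by norm_num, hΓ, Gamma_one]
    field_simp
  · refine intervalIntegral.integral_congr fun u hu => ?_
    rw [uIcc_of_le zero_le_one] at hu
    exact appellIntegrand_eq hu.1 hu.2

theorem lauricella6_to_appell :
    lauricellaFD 6 2 (fun _ => (1/2 : ℂ)) 3
      ![-1, 1/2 - Complex.I * Real.sqrt 3 / 2, 1/2 + Complex.I * Real.sqrt 3 / 2,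
        -2, 1/2 - Complex.I * Real.sqrt 7 / 2, 1/2 + Complex.I * Real.sqrt 7 / 2] =
      (2/3) * appellF1 1 (1/2) (1/2) (3/2)
        (-3/8 - Complex.I * Real.sqrt 7 / 8) (-3/8 + Complex.I * Real.sqrt 7 / 8) := by
  rw [lauricellaFD_six_eq, appellF1_eq, integral_cubicIntegrand]
  push_cast
  ring
end

section
/- The complete elliptic integral of the first kind at the singular modulus 1/√2 satisfies K(1/√2) = √3 · F_1(1/4; 1/2, 1/2; 5/4 | 1/3, 1/4). Equivalently, K(1/√2) = (√3/4) ∫_0^1 u^{−3/4} ((1 − u/3)(1 − u/4))^{−1/2} du. -/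
open MeasureTheory

namespace KSA

open Real Set intervalIntegral

/-- the real integrand in `u` -/
noncomputable def U (u : ℝ) : ℝ := u ^ (-(3:ℝ)/4) * ((1 - u/3) * (1 - u/4)) ^ (-(1:ℝ)/2)

/-- the intermediate integrand in `t` -/
noncomputable def G (t : ℝ) : ℝ := 6 / Real.sqrt ((3 - t^4) * (4 - t^4))

/-- the trigonometric integrand -/
noncomputable def g (θ : ℝ) : ℝ := (1 - Real.sin θ ^ 2 / 2) ^ (-(1:ℝ)/2)

noncomputable def c (t : ℝ) : ℝ := t * Real.sqrt ((3 - t^4)/2)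

noncomputable def f (t : ℝ) : ℝ := Real.arccos (c t)

noncomputable def f' (t : ℝ) : ℝ := -(3 * (1 + t^2) / Real.sqrt ((3 - t^4) * (t^2 + 2)))

lemma rpow_neg_half_eq {x : ℝ} (hx : 0 ≤ x) : x ^ (-(1:ℝ)/2) = 1 / Real.sqrt x := by
  rw [show (-(1:ℝ)/2) = -(1/2) by ring, Real.rpow_neg hx, ← Real.sqrt_eq_rpow, one_div]


lemma aux_t2 {t : ℝ} (h0 : 0 ≤ t) (h1 : t ≤ 1) : t^2 ≤ 1 := by nlinarith

lemma aux_t4 {t : ℝ} (h0 : 0 ≤ t) (h1 : t ≤ 1) : t^4 ≤ 1 := by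
  have ht2 : t^2 ≤ 1 := aux_t2 h0 h1
  nlinarith [mul_nonneg (sub_nonneg.mpr ht2) (show (0:ℝ) ≤ 1 + t^2 by positivity)]

lemma aux_t4' {t : ℝ} (h0 : 0 ≤ t) (h1 : t < 1) : t^4 < 1 := by
  have ht2 : t^2 < 1 := by nlinarith
  nlinarith [mul_pos (sub_pos.mpr ht2) (show (0:ℝ) < 1 + t^2 by positivity)]

lemma sqrt36 : Real.sqrt 36 = 6 := by
  rw [show (36:ℝ) = 6^2 by norm_num, Real.sqrt_sq (by norm_num : (0:ℝ) ≤ 6)]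

lemma sqrt3_mul_sqrt12 : Real.sqrt 3 * Real.sqrt 12 = 6 := by
  rw [← Real.sqrt_mul (by norm_num : (0:ℝ) ≤ 3), show (3:ℝ) * 12 = 36 by norm_num, sqrt36]

lemma g_base_pos (θ : ℝ) : 0 < 1 - Real.sin θ ^ 2 / 2 := by
  nlinarith [Real.sin_sq_le_one θ]

lemma g_cont : Continuous g := by
  rw [continuous_iff_continuousAt]
  intro θ
  exact ContinuousAt.rpow_const (by fun_prop) (Or.inl (ne_of_gt (g_base_pos θ)))

lemma c_cont : Continuous c :=
  continuous_id.mul (Real.continuous_sqrt.comp (by fun_prop))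

lemma c_sq {t : ℝ} (h4 : (0:ℝ) ≤ 3 - t^4) : c t ^ 2 = t^2 * ((3 - t^4)/2) := by
  rw [c, mul_pow, Real.sq_sqrt (by linarith)]

lemma hasDerivAt_f {t : ℝ} (h0 : 0 < t) (h1 : t < 1) : HasDerivAt f (f' t) t := by
  have h4 : (0:ℝ) < 3 - t^4 := by nlinarith [aux_t4' h0.le h1]
  have hA : (0:ℝ) < (3 - t^4)/2 := by linarith
  have hsA : 0 < Real.sqrt ((3 - t^4)/2) := Real.sqrt_pos.mpr hA
  -- derivative of inner sqrt
  have hpoly : HasDerivAt (fun s : ℝ => (3 - s^4)/2) (-(4*t^3)/2) t := by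
    have := ((hasDerivAt_pow 4 t).const_sub 3).div_const 2
    simpa using this
  have hsqrt : HasDerivAt (fun s : ℝ => Real.sqrt ((3 - s^4)/2))
      ((-(4*t^3)/2) / (2 * Real.sqrt ((3 - t^4)/2))) t :=
    hpoly.sqrt (ne_of_gt hA)
  have hc : HasDerivAt c
      (1 * Real.sqrt ((3 - t^4)/2) + t * ((-(4*t^3)/2) / (2 * Real.sqrt ((3 - t^4)/2)))) t :=
    (hasDerivAt_id t).mul hsqrt
  -- c t strictly between -1 and 1
  have h1t : (0:ℝ) < 1 - t^2 := by nlinarith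
  have hc2 : c t ^ 2 < 1 := by
    rw [c_sq h4.le]
    nlinarith [mul_pos (mul_pos h1t h1t) (show (0:ℝ) < t^2 + 2 by positivity)]
  have hc0 : 0 ≤ c t := mul_nonneg h0.le (Real.sqrt_nonneg _)
  have hclt : c t < 1 := by nlinarith
  have hcgt : -1 < c t := by linarith
  have harccos := Real.hasDerivAt_arccos (ne_of_gt hcgt) (ne_of_lt hclt)
  have hf : HasDerivAt f (-(1 / Real.sqrt (1 - c t ^ 2)) *
      (1 * Real.sqrt ((3 - t^4)/2) + t * ((-(4*t^3)/2) / (2 * Real.sqrt ((3 - t^4)/2))))) t :=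
    harccos.comp t hc
  convert hf using 1
  -- now the algebra
  have hBpos : (0:ℝ) < (t^2 + 2)/2 := by positivity
  have hsB : 0 < Real.sqrt ((t^2 + 2)/2) := Real.sqrt_pos.mpr hBpos
  have hsq1 : Real.sqrt (1 - c t ^ 2) = (1 - t^2) * Real.sqrt ((t^2 + 2)/2) := by
    rw [c_sq h4.le, show 1 - t^2 * ((3 - t^4)/2) = (1 - t^2)^2 * ((t^2 + 2)/2) by ring,
      Real.sqrt_mul (sq_nonneg _), Real.sqrt_sq h1t.le]
  have hsAB : Real.sqrt ((3 - t^4) * (t^2 + 2)) =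
      2 * (Real.sqrt ((3 - t^4)/2) * Real.sqrt ((t^2 + 2)/2)) := by
    rw [← Real.sqrt_mul hA.le, show (3 - t^4)/2 * ((t^2 + 2)/2) = ((3 - t^4) * (t^2+2))/4 by ring,
      Real.sqrt_div' _ (by norm_num : (0:ℝ) ≤ 4), show Real.sqrt 4 = 2 by
        rw [show (4:ℝ) = 2^2 by norm_num, Real.sqrt_sq (by norm_num : (0:ℝ) ≤ 2)]]
    ring
  have hA2 : Real.sqrt ((3 - t^4)/2) ^ 2 = (3 - t^4)/2 := Real.sq_sqrt hA.le
  rw [f', hsAB, hsq1]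
  set A := Real.sqrt ((3 - t^4)/2) with hAdef
  set B := Real.sqrt ((t^2 + 2)/2) with hBdef
  have hAne : A ≠ 0 := ne_of_gt hsA
  have hBne : B ≠ 0 := ne_of_gt hsB
  have h1tne : (1:ℝ) - t^2 ≠ 0 := ne_of_gt h1t
  have e1 : (1:ℝ) * A + t * ((-(4*t^3)/2) / (2 * A)) = (A^2 - t^4) / A := by
    field_simp
    ring
  have e2 : (A^2 - t^4) / A = 3 * (1 - t^4) / (2 * A) := by
    rw [hA2, div_eq_div_iff hAne (by positivity)]
    ring
  rw [e1, e2]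
  field_simp
  ring

lemma f'_cont : ContinuousOn f' (Set.uIcc (0:ℝ) 1) := by
  rw [Set.uIcc_of_le (by norm_num : (0:ℝ) ≤ 1)]
  apply ContinuousOn.neg
  apply ContinuousOn.div (by fun_prop) (by fun_prop)
  intro t ht
  simp only [Set.mem_Icc] at ht
  refine (Real.sqrt_ne_zero'.mpr ?_)
  exact mul_pos (by nlinarith [aux_t4 ht.1 ht.2]) (by positivity)

lemma f_cont : ContinuousOn f (Set.uIcc (0:ℝ) 1) :=
  (Real.continuous_arccos.comp c_cont).continuousOn

lemma f_zero : f 0 = Real.pi / 2 := by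
  simp [f, c, Real.arccos_zero]

lemma f_one : f 1 = 0 := by
  have : c 1 = 1 := by
    simp [c]
    norm_num
  simp [f, this, Real.arccos_one]

/-- pointwise identity for the first substitution -/
lemma integrand_eq {t : ℝ} (h0 : (0:ℝ) ≤ t) (h1 : t ≤ 1) :
    f' t * g (f t) = -G t := by
  have h4 : (0:ℝ) < 3 - t^4 := by nlinarith [aux_t4 h0 h1]
  have h2t : (0:ℝ) < 2 - t^2 := by nlinarith [aux_t2 h0 h1]
  have hc2 : c t ^ 2 ≤ 1 := by
    rw [c_sq h4.le]
    nlinarith [mul_nonneg (sq_nonneg (1 - t^2)) (show (0:ℝ) ≤ t^2 + 2 by positivity)]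
  have hsin : Real.sin (f t) ^ 2 = 1 - c t ^ 2 := by
    rw [f, Real.sin_arccos, Real.sq_sqrt (by linarith)]
  have hbase : 1 - Real.sin (f t) ^ 2 / 2 = (t^2+1)^2 * ((2 - t^2)/4) := by
    rw [hsin, c_sq h4.le]; ring
  have hbpos : (0:ℝ) < (t^2+1)^2 * ((2 - t^2)/4) := by positivity
  have hsq : Real.sqrt ((t^2+1)^2 * ((2 - t^2)/4)) = (t^2+1) * (Real.sqrt (2 - t^2) / 2) := by
    rw [Real.sqrt_mul (sq_nonneg _), Real.sqrt_sq (by positivity),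
      Real.sqrt_div' _ (by norm_num : (0:ℝ) ≤ 4), show Real.sqrt 4 = 2 by
        rw [show (4:ℝ) = 2^2 by norm_num, Real.sqrt_sq (by norm_num : (0:ℝ) ≤ 2)]]
  have hsplit : Real.sqrt ((3 - t^4) * (4 - t^4)) =
      Real.sqrt ((3 - t^4) * (t^2 + 2)) * Real.sqrt (2 - t^2) := by
    rw [← Real.sqrt_mul (by positivity), show ((3 - t^4) * (t^2+2)) * (2 - t^2)
      = (3 - t^4) * (4 - t^4) by ring]
  have hD : 0 < Real.sqrt ((3 - t^4) * (t^2 + 2)) :=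
    Real.sqrt_pos.mpr (mul_pos h4 (by positivity))
  have hE : 0 < Real.sqrt (2 - t^2) := Real.sqrt_pos.mpr h2t
  rw [g, hbase, rpow_neg_half_eq hbpos.le, hsq, f', G, hsplit]
  field_simp
  ring

lemma L1 : ∫ t in (0:ℝ)..1, G t = ∫ θ in (0:ℝ)..(Real.pi/2), g θ := by
  have key := intervalIntegral.integral_comp_smul_deriv''
    (f := f) (f' := f') (g := g) (a := (0:ℝ)) (b := 1)
    f_cont
    (by
      intro x hx
      rw [min_eq_left (by norm_num : (0:ℝ) ≤ 1), max_eq_right (by norm_num : (0:ℝ) ≤ 1)] at hx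
      exact (hasDerivAt_f hx.1 hx.2).hasDerivWithinAt)
    f'_cont
    (g_cont.continuousOn)
  rw [f_zero, f_one] at key
  simp only [Function.comp_apply, smul_eq_mul] at key
  have lhs_eq : ∫ x in (0:ℝ)..1, f' x * g (f x) = ∫ x in (0:ℝ)..1, -G x := by
    apply intervalIntegral.integral_congr
    intro x hx
    rw [Set.uIcc_of_le (by norm_num : (0:ℝ) ≤ 1)] at hx
    exact integrand_eq hx.1 hx.2
  rw [lhs_eq, intervalIntegral.integral_neg,
    intervalIntegral.integral_symm 0 (Real.pi/2)] at key
  linarith [key]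

lemma ellipticK_eq : ellipticK (1 / Real.sqrt 2) = ∫ θ in (0:ℝ)..(Real.pi/2), g θ := by
  unfold ellipticK
  apply intervalIntegral.integral_congr
  intro θ _
  have h2 : ((1:ℝ) / Real.sqrt 2) ^ 2 = 1/2 := by
    rw [div_pow, one_pow, Real.sq_sqrt (by norm_num : (0:ℝ) ≤ 2)]
  rw [h2, g]
  congr 1
  ring

lemma U_cont_Ioo : ContinuousOn U (Set.Ioo (0:ℝ) 1) := by
  intro u hu
  simp only [Set.mem_Ioo] at hu
  apply ContinuousWithinAt.mul
  · exact (Real.continuousAt_rpow_const u _ (Or.inl (ne_of_gt hu.1))).continuousWithinAt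
  · refine (ContinuousAt.rpow_const (by fun_prop) (Or.inl ?_)).continuousWithinAt
    have : (0:ℝ) < (1 - u/3) * (1 - u/4) := by nlinarith [hu.1, hu.2]
    exact ne_of_gt this

lemma U_intervalIntegrable : IntervalIntegrable U volume 0 1 := by
  have h1 : IntervalIntegrable (fun u : ℝ => u ^ (-(3:ℝ)/4)) volume 0 1 :=
    intervalIntegral.intervalIntegrable_rpow' (by norm_num)
  have h2 : ContinuousOn (fun u : ℝ => ((1 - u/3) * (1 - u/4)) ^ (-(1:ℝ)/2))
      (Set.uIcc (0:ℝ) 1) := by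
    intro u hu
    rw [Set.uIcc_of_le (by norm_num : (0:ℝ) ≤ 1)] at hu
    refine (ContinuousAt.rpow_const (by fun_prop) (Or.inl ?_)).continuousWithinAt
    have : (0:ℝ) < (1 - u/3) * (1 - u/4) := by nlinarith [hu.1, hu.2]
    exact ne_of_gt this
  exact h1.mul_continuousOn h2

lemma G_contOn : ContinuousOn (fun t => (2 * Real.sqrt 12 / 3) * G t) (Set.uIcc (0:ℝ) 1) := by
  apply ContinuousOn.mul continuousOn_const
  unfold G
  apply ContinuousOn.div continuousOn_const (by fun_prop)
  intro t ht
  rw [Set.uIcc_of_le (by norm_num : (0:ℝ) ≤ 1)] at ht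
  refine Real.sqrt_ne_zero'.mpr ?_
  exact mul_pos (by nlinarith [aux_t4 ht.1 ht.2]) (by nlinarith [aux_t4 ht.1 ht.2])

/-- pointwise identity for the second substitution, valid for `0 < x` -/
lemma integrand_eq2 {x : ℝ} (h0 : (0:ℝ) < x) (h1 : x ≤ 1) :
    (4:ℝ) * x^3 * U (x^4) = (2 * Real.sqrt 12 / 3) * G x := by
  have hx4 : (0:ℝ) < x^4 := by positivity
  have hx41 : x^4 ≤ 1 := aux_t4 h0.le h1
  have e1 : (x^4 : ℝ) ^ (-(3:ℝ)/4) = (x^3)⁻¹ := by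
    rw [← Real.rpow_natCast x 4, ← Real.rpow_mul h0.le,
      show ((4:ℕ):ℝ) * (-(3:ℝ)/4) = -((3:ℕ):ℝ) by norm_num,
      Real.rpow_neg h0.le, Real.rpow_natCast]
  have hb : (0:ℝ) ≤ (1 - x^4/3) * (1 - x^4/4) := by nlinarith [hx41, hx4]
  have e2 : ((1 - x^4/3) * (1 - x^4/4)) ^ (-(1:ℝ)/2)
      = Real.sqrt 12 / Real.sqrt ((3 - x^4) * (4 - x^4)) := by
    rw [rpow_neg_half_eq hb, show (1 - x^4/3) * (1 - x^4/4)
      = ((3 - x^4) * (4 - x^4)) / 12 by ring,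
      Real.sqrt_div (by nlinarith [hx41]) 12, one_div_div]
  have hDpos : (0:ℝ) < Real.sqrt ((3 - x^4) * (4 - x^4)) :=
    Real.sqrt_pos.mpr (by nlinarith [hx41])
  rw [U, e1, e2, G]
  have hx3 : x^3 ≠ 0 := by positivity
  field_simp
  ring

lemma L2 : ∫ u in (0:ℝ)..1, U u = (2 * Real.sqrt 12 / 3) * ∫ t in (0:ℝ)..1, G t := by
  have himg_Ioo : (fun t : ℝ => t^4) '' Set.Ioo 0 1 ⊆ Set.Ioo 0 1 := by
    rintro _ ⟨t, ht, rfl⟩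
    show t^4 ∈ Set.Ioo (0:ℝ) 1
    exact ⟨pow_pos ht.1 4, aux_t4' ht.1.le ht.2⟩
  have himg_Icc : (fun t : ℝ => t^4) '' Set.uIcc (0:ℝ) 1 ⊆ Set.Icc 0 1 := by
    rintro _ ⟨t, ht, rfl⟩
    rw [Set.uIcc_of_le (by norm_num : (0:ℝ) ≤ 1)] at ht
    show t^4 ∈ Set.Icc (0:ℝ) 1
    exact ⟨by positivity, aux_t4 ht.1 ht.2⟩
  have key := intervalIntegral.integral_comp_smul_deriv'''
    (f := fun t : ℝ => t^4) (f' := fun t : ℝ => 4*t^3) (g := U) (a := (0:ℝ)) (b := 1)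
    (by fun_prop)
    (by
      intro x hx
      have := (hasDerivAt_pow 4 x).hasDerivWithinAt (s := Set.Ioi x)
      simpa using this.congr_deriv (by norm_num))
    (U_cont_Ioo.mono (by
      rw [min_eq_left (by norm_num : (0:ℝ) ≤ 1), max_eq_right (by norm_num : (0:ℝ) ≤ 1)]
      exact himg_Ioo))
    (by
      have : IntegrableOn U (Set.Icc (0:ℝ) 1) := by
        rw [integrableOn_Icc_iff_integrableOn_Ioc]
        exact (intervalIntegrable_iff_integrableOn_Ioc_of_le (by norm_num)).mp
          U_intervalIntegrable
      exact this.mono_set himg_Icc)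
    (by
      -- integrability of the transported integrand
      have hcont : IntegrableOn (fun t => (2 * Real.sqrt 12 / 3) * G t) (Set.uIcc (0:ℝ) 1) :=
        G_contOn.integrableOn_compact isCompact_uIcc
      apply hcont.congr_fun_ae
      have h0 : ∀ᵐ x : ℝ ∂(volume.restrict (Set.uIcc (0:ℝ) 1)), x ≠ 0 := by
        refine ae_restrict_of_ae ?_
        have : (volume : Measure ℝ) {(0:ℝ)} = 0 := measure_singleton 0
        rw [MeasureTheory.ae_iff]
        simpa using this
      have hmem : ∀ᵐ x : ℝ ∂(volume.restrict (Set.uIcc (0:ℝ) 1)), x ∈ Set.uIcc (0:ℝ) 1 :=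
        ae_restrict_mem measurableSet_uIcc
      filter_upwards [h0, hmem] with x hx hxm
      rw [Set.uIcc_of_le (by norm_num : (0:ℝ) ≤ 1)] at hxm
      have hx0 : 0 < x := lt_of_le_of_ne hxm.1 (Ne.symm hx)
      simp only [Function.comp_apply, smul_eq_mul]
      exact (integrand_eq2 hx0 hxm.2).symm)
  simp only [smul_eq_mul] at key
  rw [show ((0:ℝ)^4 : ℝ) = 0 by norm_num, show ((1:ℝ)^4 : ℝ) = 1 by norm_num] at key
  rw [← key]
  rw [← intervalIntegral.integral_const_mul]
  apply intervalIntegral.integral_congr_ae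
  have h0 : ∀ᵐ x : ℝ, x ≠ (0:ℝ) := by
    rw [MeasureTheory.ae_iff]
    simpa using (measure_singleton (0:ℝ) : (volume : Measure ℝ) {(0:ℝ)} = 0)
  filter_upwards [h0] with x hx hxm
  rw [Set.uIoc_of_le (by norm_num : (0:ℝ) ≤ 1)] at hxm
  simp only [Function.comp_apply]
  exact integrand_eq2 hxm.1 hxm.2

lemma conj2 : ellipticK (1 / Real.sqrt 2) =
    (Real.sqrt 3 / 4) * ∫ u in (0:ℝ)..1, U u := by
  rw [L2, ellipticK_eq, ← L1, ← mul_assoc]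
  have : Real.sqrt 3 / 4 * (2 * Real.sqrt 12 / 3) = 1 := by
    have h := sqrt3_mul_sqrt12
    field_simp
    linarith
  rw [this, one_mul]

lemma quarter_ne : ∀ m : ℕ, (1/4 : ℂ) ≠ -m := by
  intro m h
  have := congrArg Complex.re h
  simp only [Complex.neg_re, Complex.natCast_re] at this
  norm_num at this
  have : (0:ℝ) ≤ (m:ℝ) := Nat.cast_nonneg m
  linarith [this]

lemma L3 : appellF1 (1/4) (1/2) (1/2) (5/4) (1/3) (1/4)
    = (1/4 : ℂ) * ((∫ u in (0:ℝ)..1, U u : ℝ) : ℂ) := by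
  unfold appellF1 lauricellaFD
  have hΓ : Complex.Gamma (5/4) / (Complex.Gamma (1/4) * Complex.Gamma (5/4 - 1/4))
      = (1/4 : ℂ) := by
    rw [show (5/4 : ℂ) - 1/4 = 1 by norm_num, Complex.Gamma_one,
      show (5/4 : ℂ) = 1/4 + 1 by norm_num,
      Complex.Gamma_add_one _ (by norm_num : (1/4 : ℂ) ≠ 0)]
    rw [mul_one]
    rw [mul_div_assoc, div_self (Complex.Gamma_ne_zero quarter_ne), mul_one]
  rw [hΓ]
  congr 1
  have hint : ∀ u ∈ Set.uIcc (0:ℝ) 1,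
      ((u : ℂ) ^ ((1/4 : ℂ) - 1) * ((1 : ℂ) - u) ^ ((5/4 : ℂ) - 1/4 - 1) *
        ∏ k, ((1 : ℂ) - ![(1/3 : ℂ), 1/4] k * u) ^ (-(![(1/2 : ℂ), 1/2] k)))
      = ((U u : ℝ) : ℂ) := by
    intro u hu
    rw [Set.uIcc_of_le (by norm_num : (0:ℝ) ≤ 1)] at hu
    obtain ⟨hu0, hu1⟩ := hu
    rw [Fin.prod_univ_two]
    simp only [Matrix.cons_val_zero, Matrix.cons_val_one, Matrix.head_cons]
    rw [show ((5/4 : ℂ) - 1/4 - 1) = 0 by norm_num, Complex.cpow_zero, mul_one]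
    have e1 : (u : ℂ) ^ ((1/4 : ℂ) - 1) = ((u ^ (-(3:ℝ)/4) : ℝ) : ℂ) := by
      rw [Complex.ofReal_cpow hu0]
      norm_num
    have h3 : ((1:ℂ) - (1/3) * u) = (((1 - u/3 : ℝ) : ℂ)) := by push_cast; ring
    have h4 : ((1:ℂ) - (1/4) * u) = (((1 - u/4 : ℝ) : ℂ)) := by push_cast; ring
    have hb3 : (0:ℝ) ≤ 1 - u/3 := by linarith
    have hb4 : (0:ℝ) ≤ 1 - u/4 := by linarith
    have e3 : ((1:ℂ) - (1/3) * u) ^ (-(1/2 : ℂ)) = (((1 - u/3) ^ (-(1:ℝ)/2) : ℝ) : ℂ) := by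
      rw [h3, Complex.ofReal_cpow hb3]
      norm_num
    have e4 : ((1:ℂ) - (1/4) * u) ^ (-(1/2 : ℂ)) = (((1 - u/4) ^ (-(1:ℝ)/2) : ℝ) : ℂ) := by
      rw [h4, Complex.ofReal_cpow hb4]
      norm_num
    rw [e1, e3, e4, ← Complex.ofReal_mul, ← Complex.ofReal_mul]
    rw [U, Real.mul_rpow hb3 hb4]
    try push_cast
    try ring
  rw [intervalIntegral.integral_congr hint]
  exact intervalIntegral.integral_ofReal

end KSA

theorem K_singular_appell :
    ((ellipticK (1 / Real.sqrt 2) : ℝ) : ℂ) =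
      (Real.sqrt 3 : ℂ) * appellF1 (1/4) (1/2) (1/2) (5/4) (1/3) (1/4) ∧
    ellipticK (1 / Real.sqrt 2) =
      (Real.sqrt 3 / 4) *
        ∫ u in (0:ℝ)..1, u ^ (-(3:ℝ)/4) * ((1 - u/3) * (1 - u/4)) ^ (-(1:ℝ)/2) := by
  have h2 : ellipticK (1 / Real.sqrt 2) =
      (Real.sqrt 3 / 4) * ∫ u in (0:ℝ)..1, KSA.U u := KSA.conj2
  constructor
  · rw [KSA.L3, h2]
    push_cast
    try ring
  · exact h2
end

section
/- The following Hermite reduction of a genus-2 hyperelliptic integral holds: (5/14)·√(7/3 + √(7/3)) · K((1/7)·√((49 − 9√21)/2)) = F_D^{(4)}(1/2; 1/2, 1/2, 1/2, 1/2; 3/2 | (3√21 − 17)/25, (3 − √21)/12, (√21 − 3)/3, (11 − √21)/25). -/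
open MeasureTheory

/-!
Substituting `w = sin² θ` gives `K(k) = ½ ∫₀¹ dw / √(w (1 - w) (1 - k² w))`. Hermite's reduction is
the cubic substitution `w = N(v) / D(v)` with `D = 1 + k² N` and `N(v) = c v (1 - x₁ v) (1 - x₂ v)`,
which maps `[0, 1]` increasingly onto itself. One has `D - N = (v - 1)² (1 - x₀ v)`,
`D = c' (v + α)² (1 - x₃ v)` and `N' = c'' (v - 1) (v + α)` with `α = (5 + √21) / 2`; since
`1 - k² w = 1 / D`, the double roots of `D - N` and `D` cancel against `N'²`, and the elliptic
differential pulls back to `C⁻¹ dv / √(v ∏ₖ (1 - xₖ v))` with `C = (5/14) √(7/3 + √(7/3))`.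
For `a = b_k = 1/2`, `c = 3/2` the Gamma prefactor of `F_D` is `1/2` and its Euler integrand is
`1 / √(u ∏ₖ (1 - xₖ u))`.
-/

open Real Set

lemma mul_inv_sqrt_eq_mul_inv_sqrt {a b c d : ℝ} (ha : 0 < a) (hb : 0 < b) (hc : 0 ≤ c)
    (hd : 0 ≤ d) (h : c ^ 2 * b = d ^ 2 * a) : c * (√a)⁻¹ = d * (√b)⁻¹ := by
  rw [← sqrt_sq hc, ← sqrt_sq hd, ← sqrt_inv, ← sqrt_inv, ← sqrt_mul (sq_nonneg _),
    ← sqrt_mul (sq_nonneg _)]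
  congr 1
  field_simp
  linarith

lemma rpow_neg_one_div_two {x : ℝ} (hx : 0 ≤ x) : x ^ (-(1:ℝ) / 2) = (√x)⁻¹ := by
  rw [neg_div, rpow_neg hx, ← sqrt_eq_rpow]

theorem setIntegral_Ioo_comp_mul_deriv_of_deriv_pos {f g g' : ℝ → ℝ} {a b : ℝ} (hab : a ≤ b)
    (hg : ContinuousOn g (Icc a b)) (hg' : ∀ x ∈ Ioo a b, HasDerivAt g (g' x) x)
    (hpos : ∀ x ∈ Ioo a b, 0 < g' x) :
    ∫ x in Ioo a b, f (g x) * g' x = ∫ y in Ioo (g a) (g b), f y := by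
  have hmono : StrictMonoOn g (Icc a b) :=
    strictMonoOn_of_hasDerivWithinAt_pos (convex_Icc a b) hg
      (fun x hx ↦ (hg' x (by rwa [interior_Icc] at hx)).hasDerivWithinAt)
      (fun x hx ↦ hpos x (by rwa [interior_Icc] at hx))
  rw [← hg.image_Ioo_of_strictMonoOn hab hmono,
    integral_image_eq_integral_abs_deriv_smul measurableSet_Ioo
      (fun x hx ↦ (hg' x hx).hasDerivWithinAt) (hmono.injOn.mono Ioo_subset_Icc_self)]
  refine setIntegral_congr_fun measurableSet_Ioo fun x hx ↦ ?_
  rw [abs_of_pos (hpos x hx), smul_eq_mul, mul_comm]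

theorem ellipticK_eq_half_integral {k : ℝ} (hk : k ^ 2 ≤ 1) :
    ellipticK k = 1 / 2 * ∫ w in Ioo (0:ℝ) 1, (√(w * (1 - w) * (1 - k ^ 2 * w)))⁻¹ := by
  have hderiv (θ : ℝ) : HasDerivAt (fun θ ↦ sin θ ^ 2) (2 * sin θ * cos θ) θ :=
    ((hasDerivAt_sin θ).pow 2).congr_deriv (by ring)
  have hsin {θ : ℝ} (hθ : θ ∈ Ioo 0 (π / 2)) : 0 < sin θ :=
    sin_pos_of_pos_of_lt_pi hθ.1 (by linarith [hθ.2, pi_pos])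
  have hcos {θ : ℝ} (hθ : θ ∈ Ioo 0 (π / 2)) : 0 < cos θ :=
    cos_pos_of_mem_Ioo ⟨by linarith [hθ.1, pi_pos], hθ.2⟩
  have hsubst := setIntegral_Ioo_comp_mul_deriv_of_deriv_pos
    (f := fun w ↦ (√(w * (1 - w) * (1 - k ^ 2 * w)))⁻¹) (g := fun θ ↦ sin θ ^ 2) (by positivity)
    (continuous_sin.pow 2).continuousOn (fun θ _ ↦ hderiv θ)
    (fun θ hθ ↦ mul_pos (mul_pos two_pos (hsin hθ)) (hcos hθ))
  simp only [sin_zero, sin_pi_div_two, zero_pow two_ne_zero, one_pow] at hsubst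
  rw [← hsubst, ← integral_const_mul, ellipticK, intervalIntegral.integral_of_le (by positivity),
    integral_Ioc_eq_integral_Ioo]
  refine setIntegral_congr_fun measurableSet_Ioo fun θ hθ ↦ ?_
  have hs := hsin hθ
  have hc := hcos hθ
  have hcs : 1 - sin θ ^ 2 = cos θ ^ 2 := by linarith [sin_sq_add_cos_sq θ]
  have hm : 0 < 1 - k ^ 2 * sin θ ^ 2 := by nlinarith [sin_sq_le_one θ, pow_pos hs 2]
  rw [rpow_neg_one_div_two hm.le, ← one_mul (√_)⁻¹, hcs]
  calc 1 * (√(1 - k ^ 2 * sin θ ^ 2))⁻¹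
      = (sin θ * cos θ) * (√(sin θ ^ 2 * cos θ ^ 2 * (1 - k ^ 2 * sin θ ^ 2)))⁻¹ :=
        mul_inv_sqrt_eq_mul_inv_sqrt hm (by positivity) zero_le_one (by positivity) (by ring)
    _ = _ := by ring

theorem lauricellaFD_half_threeHalves {n : ℕ} (x : Fin n → ℝ) (hx : ∀ k, x k ≤ 1) :
    lauricellaFD n (1 / 2) (fun _ ↦ 1 / 2) (3 / 2) (fun k ↦ (x k : ℂ)) =
      ((1 / 2 * ∫ u in Ioo (0:ℝ) 1, (√(u * ∏ k, (1 - x k * u)))⁻¹ : ℝ) : ℂ) := by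
  have hGamma : Complex.Gamma (3 / 2) / (Complex.Gamma (1 / 2) * Complex.Gamma (3 / 2 - 1 / 2))
      = 1 / 2 := by
    have hne : Complex.Gamma (1 / 2) ≠ 0 := Complex.Gamma_ne_zero_of_re_pos (by norm_num)
    rw [show (3 / 2 - 1 / 2 : ℂ) = 1 by norm_num, Complex.Gamma_one,
      show (3 / 2 : ℂ) = 1 / 2 + 1 by norm_num, Complex.Gamma_add_one _ (by norm_num)]
    field_simp
  rw [lauricellaFD, hGamma, intervalIntegral.integral_of_le zero_le_one,
    integral_Ioc_eq_integral_Ioo, Complex.ofReal_mul, ← integral_complex_ofReal]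
  push_cast
  congr 1
  refine setIntegral_congr_fun measurableSet_Ioo fun u ⟨hu₀, hu₁⟩ ↦ ?_
  have hpos (k : Fin n) : 0 < 1 - x k * u := by nlinarith [hx k]
  have hprod : 0 ≤ ∏ k, (1 - x k * u) := Finset.prod_nonneg fun k _ ↦ (hpos k).le
  rw [← Complex.ofReal_inv, ← rpow_neg_one_div_two (mul_nonneg hu₀.le hprod), mul_rpow hu₀.le hprod,
    ← Real.finsetProd_rpow _ _ fun k _ ↦ (hpos k).le]
  have hexp : (1 / 2 - 1 : ℂ) = ((-(1:ℝ) / 2 : ℝ) : ℂ) := by push_cast; norm_num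
  have hexp' : (-(1 / 2) : ℂ) = ((-(1:ℝ) / 2 : ℝ) : ℂ) := by push_cast; norm_num
  have hfac (k : Fin n) : (1 - (x k : ℂ) * u) = ((1 - x k * u : ℝ) : ℂ) := by push_cast; ring
  simp only [hexp, hexp', hfac, show (3 / 2 - 1 / 2 - 1 : ℂ) = 0 by norm_num, Complex.cpow_zero,
    mul_one, ← Complex.ofReal_cpow hu₀.le, ← Complex.ofReal_cpow (hpos _).le]
  norm_cast

namespace HermiteGenus2

noncomputable section

def lauricellaArg : Fin 4 → ℝ :=
  ![(3 * √21 - 17) / 25, (3 - √21) / 12, (√21 - 3) / 3, (11 - √21) / 25]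

def modulusSq : ℝ := (49 - 9 * √21) / 98

def num (v : ℝ) : ℝ :=
  (147 - 21 * √21) / 25 * v * (1 - lauricellaArg 1 * v) * (1 - lauricellaArg 2 * v)

def num' (v : ℝ) : ℝ := (126 * √21 - 588) / 25 * (v - 1) * (v + (5 + √21) / 2)

def den (v : ℝ) : ℝ := 1 + modulusSq * num v

def hermiteMap (v : ℝ) : ℝ := num v / den v

def scale : ℝ := 5 / 14 * √(7 / 3 + √(7 / 3))

end

lemma sqrt21_sq : √21 ^ 2 = 21 := sq_sqrt (by norm_num)

lemma sqrt21_gt : 4.5 < √21 := by nlinarith [sqrt21_sq, sqrt_nonneg 21]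

lemma sqrt21_lt : √21 < 4.6 := by nlinarith [sqrt21_sq, sqrt_nonneg 21]

lemma lauricellaArg_lt_one (k : Fin 4) : lauricellaArg k < 1 := by
  fin_cases k <;> simp [lauricellaArg] <;> linarith [sqrt21_gt, sqrt21_lt]

lemma one_sub_lauricellaArg_mul_pos (k : Fin 4) {v : ℝ} (hv : v ∈ Icc 0 1) :
    0 < 1 - lauricellaArg k * v := by
  rcases le_or_gt (lauricellaArg k) 0 with h | h <;> nlinarith [lauricellaArg_lt_one k, hv.1, hv.2]

lemma modulusSq_le_one : modulusSq ≤ 1 := by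
  unfold modulusSq
  linarith [sqrt_nonneg 21]

lemma den_eq (v : ℝ) :
    den v = (23 - 5 * √21) / 2 * (v + (5 + √21) / 2) ^ 2 * (1 - lauricellaArg 3 * v) := by
  have := sqrt21_sq
  simp only [den, num, modulusSq, lauricellaArg, Matrix.cons_val]
  grind

lemma den_sub_num (v : ℝ) : den v - num v = (v - 1) ^ 2 * (1 - lauricellaArg 0 * v) := by
  have := sqrt21_sq
  simp only [den, num, modulusSq, lauricellaArg, Matrix.cons_val]
  grind

lemma hasDerivAt_num (v : ℝ) : HasDerivAt num (num' v) v := by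
  have := sqrt21_sq
  have hlin (a : ℝ) := ((hasDerivAt_id v).const_mul a).const_sub 1
  refine ((((hasDerivAt_id v).const_mul _).mul (hlin (lauricellaArg 1))).mul
    (hlin (lauricellaArg 2))).congr_deriv ?_
  simp only [num', lauricellaArg, Matrix.cons_val, Pi.mul_apply, id_eq]
  grind

lemma num_pos {v : ℝ} (hv : v ∈ Ioc 0 1) : 0 < num v := by
  have hc : 0 < (147 - 21 * √21) / 25 := by linarith [sqrt21_lt]
  have h₁ := one_sub_lauricellaArg_mul_pos 1 (Ioc_subset_Icc_self hv)
  have h₂ := one_sub_lauricellaArg_mul_pos 2 (Ioc_subset_Icc_self hv)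
  exact mul_pos (mul_pos (mul_pos hc hv.1) h₁) h₂

lemma den_pos {v : ℝ} (hv : v ∈ Icc 0 1) : 0 < den v := by
  have hc : 0 < (23 - 5 * √21) / 2 := by linarith [sqrt21_lt]
  have hα : 0 < v + (5 + √21) / 2 := by linarith [hv.1, sqrt_nonneg 21]
  rw [den_eq]
  exact mul_pos (mul_pos hc (pow_pos hα 2)) (one_sub_lauricellaArg_mul_pos 3 hv)

lemma num_lt_den {v : ℝ} (hv : v ∈ Ico 0 1) : num v < den v := by
  have h₀ := one_sub_lauricellaArg_mul_pos 0 (Ico_subset_Icc_self hv)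
  have : 0 < (v - 1) ^ 2 := by nlinarith [hv.2]
  nlinarith [den_sub_num v]

lemma num'_pos {v : ℝ} (hv : v ∈ Ico 0 1) : 0 < num' v := by
  have hc : (126 * √21 - 588) / 25 < 0 := by linarith [sqrt21_lt]
  have hα : 0 < v + (5 + √21) / 2 := by linarith [hv.1, sqrt_nonneg 21]
  exact mul_pos (mul_pos_of_neg_of_neg hc (by linarith [hv.2])) hα

lemma hermiteMap_zero : hermiteMap 0 = 0 := by simp [hermiteMap, num]

lemma hermiteMap_one : hermiteMap 1 = 1 := by
  have h : den 1 - num 1 = 0 := by simp [den_sub_num]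
  rw [hermiteMap, ← sub_eq_zero.mp h, div_self (den_pos ⟨zero_le_one, le_rfl⟩).ne']

lemma hasDerivAt_hermiteMap {v : ℝ} (hv : v ∈ Icc 0 1) :
    HasDerivAt hermiteMap (num' v / den v ^ 2) v := by
  refine ((hasDerivAt_num v).div ((hasDerivAt_num v).const_mul modulusSq |>.const_add 1)
    (den_pos hv).ne').congr_deriv ?_
  simp only [den]
  ring

lemma continuousOn_hermiteMap : ContinuousOn hermiteMap (Icc 0 1) :=
  fun _ hv ↦ (hasDerivAt_hermiteMap hv).continuousAt.continuousWithinAt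

lemma scale_pos : 0 < scale := by unfold scale; positivity

lemma scale_sq : scale ^ 2 = 25 * (7 + √21) / 588 := by
  have h : √(7 / 3) = √21 / 3 := by
    rw [show (7 : ℝ) / 3 = 21 / 3 ^ 2 by norm_num, sqrt_div' _ (by positivity),
      sqrt_sq (by norm_num)]
  rw [scale, mul_pow, sq_sqrt (by positivity), h]
  ring

lemma scale_sq_mul_num'_sq (v : ℝ) :
    scale ^ 2 * num' v ^ 2 * (v * ∏ k, (1 - lauricellaArg k * v)) =
      num v * (den v - num v) * den v := by
  have hconst : 25 * (7 + √21) / 588 * ((126 * √21 - 588) / 25) ^ 2 =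
      (147 - 21 * √21) / 25 * ((23 - 5 * √21) / 2) := by
    linear_combination (-231 / 50 + 27 / 25 * √21) * sqrt21_sq
  rw [den_sub_num, den_eq, scale_sq, Fin.prod_univ_four]
  simp only [num, num']
  linear_combination (v * (v - 1) ^ 2 * (v + (5 + √21) / 2) ^ 2 * (1 - lauricellaArg 0 * v) *
    (1 - lauricellaArg 1 * v) * (1 - lauricellaArg 2 * v) * (1 - lauricellaArg 3 * v)) * hconst

lemma hermiteMap_pullback {v : ℝ} (hv : v ∈ Ioo 0 1) :
    (√(hermiteMap v * (1 - hermiteMap v) * (1 - modulusSq * hermiteMap v)))⁻¹ *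
        (num' v / den v ^ 2) =
      scale⁻¹ * (√(v * ∏ k, (1 - lauricellaArg k * v)))⁻¹ := by
  have hN := num_pos (Ioo_subset_Ioc_self hv)
  have hD := den_pos (Ioo_subset_Icc_self hv)
  have hDN := num_lt_den (Ioo_subset_Ico_self hv)
  have hN' := num'_pos (Ioo_subset_Ico_self hv)
  have hP : 0 < ∏ k, (1 - lauricellaArg k * v) :=
    Finset.prod_pos fun k _ ↦ one_sub_lauricellaArg_mul_pos k (Ioo_subset_Icc_self hv)
  have hw : hermiteMap v * (1 - hermiteMap v) * (1 - modulusSq * hermiteMap v) =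
      num v * (den v - num v) / den v ^ 3 := by
    simp only [hermiteMap]
    field_simp
    simp only [den]
    ring
  have hkey := scale_sq_mul_num'_sq v
  generalize ∏ k, (1 - lauricellaArg k * v) = P at hP hkey ⊢
  rw [hw, mul_comm]
  refine mul_inv_sqrt_eq_mul_inv_sqrt (div_pos (mul_pos hN (sub_pos.2 hDN)) (pow_pos hD 3))
    (mul_pos hv.1 hP) (by positivity) (inv_nonneg.2 scale_pos.le) ?_
  field_simp [scale_pos.ne']
  linear_combination hkey

theorem integral_cubic_eq_scale_inv_mul_integral_quartic :
    ∫ w in Ioo (0:ℝ) 1, (√(w * (1 - w) * (1 - modulusSq * w)))⁻¹ =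
      scale⁻¹ * ∫ v in Ioo (0:ℝ) 1, (√(v * ∏ k, (1 - lauricellaArg k * v)))⁻¹ := by
  have h := setIntegral_Ioo_comp_mul_deriv_of_deriv_pos
    (f := fun w ↦ (√(w * (1 - w) * (1 - modulusSq * w)))⁻¹) zero_le_one continuousOn_hermiteMap
    (fun v hv ↦ hasDerivAt_hermiteMap (Ioo_subset_Icc_self hv))
    (fun v hv ↦ div_pos (num'_pos (Ioo_subset_Ico_self hv))
      (pow_pos (den_pos (Ioo_subset_Icc_self hv)) 2))
  rw [hermiteMap_zero, hermiteMap_one] at h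
  rw [← h, ← integral_const_mul]
  exact setIntegral_congr_fun measurableSet_Ioo fun v hv ↦ hermiteMap_pullback hv

lemma modulus_sq : (1 / 7 * √((49 - 9 * √21) / 2)) ^ 2 = modulusSq := by
  rw [mul_pow, sq_sqrt (by linarith [sqrt21_lt]), modulusSq]
  ring

lemma ofReal_lauricellaArg : ![(((3 * √21 - 17) / 25 : ℝ) : ℂ), (((3 - √21) / 12 : ℝ) : ℂ),
    (((√21 - 3) / 3 : ℝ) : ℂ), (((11 - √21) / 25 : ℝ) : ℂ)] = fun k ↦ (lauricellaArg k : ℂ) := by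
  ext k
  fin_cases k <;> rfl

end HermiteGenus2

open HermiteGenus2

theorem hermite_genus2_value :
    (((5/14) * Real.sqrt (7/3 + Real.sqrt (7/3)) *
        ellipticK ((1/7) * Real.sqrt ((49 - 9 * Real.sqrt 21) / 2)) : ℝ) : ℂ) =
      lauricellaFD 4 (1/2) (fun _ => (1/2 : ℂ)) (3/2)
        ![((3 * Real.sqrt 21 - 17) / 25 : ℝ), ((3 - Real.sqrt 21) / 12 : ℝ),
          ((Real.sqrt 21 - 3) / 3 : ℝ), ((11 - Real.sqrt 21) / 25 : ℝ)] := by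
  have hK := ellipticK_eq_half_integral (modulus_sq ▸ modulusSq_le_one)
  rw [modulus_sq, integral_cubic_eq_scale_inv_mul_integral_quartic] at hK
  rw [ofReal_lauricellaArg,
    lauricellaFD_half_threeHalves lauricellaArg fun k ↦ (lauricellaArg_lt_one k).le,
    show 5 / 14 * √(7 / 3 + √(7 / 3)) = scale from rfl, hK]
  congr 1
  field_simp [scale_pos.ne']
end

section
/- (Legendre) Let a, n be real numbers with 0 < 2a < n. Then ∫_0^1 x^{a−1} (1 − x^n)^{−1/2} dx = cos(aπ/n) · ∫_0^∞ z^{a−1} (1 + z^n)^{−1/2} dz. -/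
/-!
With `s = a / n`, the substitution `t = x ^ n` turns the left integral into `B(s, 1/2) / n`, and the
substitutions `u = z ^ n`, `y = u / (1 + u)` turn the right one into `B(s, 1/2 - s) / n`. In terms
of `Γ` their ratio is `Γ(1/2)² / (Γ(1/2 + s) Γ(1/2 - s))`, which is `cos (π s)` by the
reflection formula.
-/

open MeasureTheory Set Real ProbabilityTheory

theorem rpow_sub_one_mul_rpow_rpow_div_sub_one {x : ℝ} (hx : 0 < x) (a : ℝ) {n : ℝ}
    (hn : n ≠ 0) :
    x ^ (n - 1) * (x ^ n) ^ (a / n - 1) = x ^ (a - 1) := by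
  rw [← rpow_mul hx.le, ← rpow_add hx]
  congr 1
  field_simp
  ring

theorem setIntegral_Ioo_zero_one_comp_rpow_of_pos {E : Type*} [NormedAddCommGroup E]
    [NormedSpace ℝ E] {g : ℝ → E} {p : ℝ} (hp : 0 < p) :
    ∫ x in Ioo 0 1, (p * x ^ (p - 1)) • g (x ^ p) = ∫ y in Ioo 0 1, g y := by
  have himage : (fun x : ℝ => x ^ p) '' Ioo 0 1 = Ioo (0 : ℝ) 1 := by
    ext y
    constructor
    · rintro ⟨x, hx, rfl⟩
      exact ⟨rpow_pos_of_pos hx.1 p, rpow_lt_one hx.1.le hx.2 hp⟩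
    · intro hy
      exact ⟨y ^ p⁻¹, ⟨rpow_pos_of_pos hy.1 _, rpow_lt_one hy.1.le hy.2 (by positivity)⟩,
        rpow_inv_rpow hy.1.le hp.ne'⟩
  have hchange := integral_image_eq_integral_abs_deriv_smul (measurableSet_Ioo (a := (0:ℝ)) (b := 1))
    (fun x hx ↦ (hasDerivAt_rpow_const (Or.inl hx.1.ne')).hasDerivWithinAt)
    ((rpow_left_injOn hp.ne').mono fun (x : ℝ) hx => hx.1.le) g
  rw [himage] at hchange
  rw [hchange]
  refine setIntegral_congr_fun measurableSet_Ioo fun x hx ↦ ?_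
  rw [abs_of_nonneg (by have := hx.1; positivity)]

theorem integral_Ioi_eq_setIntegral_Ioo_div_one_sub {E : Type*} [NormedAddCommGroup E]
    [NormedSpace ℝ E] (g : ℝ → E) :
    ∫ u in Ioi 0, g u = ∫ y in Ioo 0 1, ((1 - y) ^ 2)⁻¹ • g (y / (1 - y)) := by
  have himage : (fun y : ℝ => y / (1 - y)) '' Ioo 0 1 = Ioi 0 := by
    ext u
    refine ⟨fun ⟨y, hy, hyu⟩ => hyu ▸ div_pos hy.1 (sub_pos.2 hy.2), fun hu => ?_⟩
    have hu : (0:ℝ) < u := hu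
    refine ⟨u / (1 + u), ⟨by positivity, (div_lt_one (by positivity)).2 (by linarith)⟩, ?_⟩
    field_simp
    ring
  have hderiv : ∀ y ∈ Ioo (0:ℝ) 1,
      HasDerivWithinAt (fun y : ℝ => y / (1 - y)) ((1 - y) ^ 2)⁻¹ (Ioo 0 1) y := by
    intro y hy
    have hy1 : 1 - y ≠ 0 := (sub_pos.2 hy.2).ne'
    refine ((hasDerivAt_id' y).div ((hasDerivAt_id' y).const_sub 1) hy1)
      |>.hasDerivWithinAt.congr_deriv ?_
    field_simp
    ring
  have hinj : InjOn (fun y : ℝ => y / (1 - y)) (Ioo 0 1) := by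
    intro x hx y hy hxy
    have := (sub_pos.2 hx.2).ne'
    have := (sub_pos.2 hy.2).ne'
    field_simp at hxy
    linarith
  rw [← himage, integral_image_eq_integral_abs_deriv_smul measurableSet_Ioo hderiv hinj]
  refine setIntegral_congr_fun measurableSet_Ioo fun y _ ↦ ?_
  rw [abs_of_nonneg (by positivity)]

theorem setIntegral_Ioo_rpow_mul_comp_rpow (a : ℝ) {n : ℝ} (hn : 0 < n) (f : ℝ → ℝ) :
    ∫ x in Ioo 0 1, x ^ (a - 1) * f (x ^ n) =
      n⁻¹ * ∫ t in Ioo 0 1, t ^ (a / n - 1) * f t := by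
  conv_rhs => rw [← setIntegral_Ioo_zero_one_comp_rpow_of_pos hn, ← integral_const_mul]
  refine setIntegral_congr_fun measurableSet_Ioo fun x hx ↦ ?_
  rw [smul_eq_mul, mul_assoc n, inv_mul_cancel_left₀ hn.ne', ← mul_assoc,
    rpow_sub_one_mul_rpow_rpow_div_sub_one hx.1 a hn.ne']

theorem integral_Ioi_rpow_mul_comp_rpow (a : ℝ) {n : ℝ} (hn : 0 < n) (f : ℝ → ℝ) :
    ∫ x in Ioi 0, x ^ (a - 1) * f (x ^ n) = n⁻¹ * ∫ t in Ioi 0, t ^ (a / n - 1) * f t := by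
  conv_rhs => rw [← integral_comp_rpow_Ioi_of_pos hn, ← integral_const_mul]
  refine setIntegral_congr_fun measurableSet_Ioi fun x hx ↦ ?_
  rw [smul_eq_mul, mul_assoc n, inv_mul_cancel_left₀ hn.ne', ← mul_assoc,
    rpow_sub_one_mul_rpow_rpow_div_sub_one hx a hn.ne']

theorem intervalIntegral_rpow_mul_one_sub_rpow_eq_beta {s t : ℝ} (hs : 0 < s) (ht : 0 < t) :
    ∫ x in (0:ℝ)..1, x ^ (s - 1) * (1 - x) ^ (t - 1) = beta s t := by
  have hbeta : Complex.betaIntegral s t =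
      ↑(∫ x in (0:ℝ)..1, x ^ (s - 1) * (1 - x) ^ (t - 1)) := by
    rw [← intervalIntegral.integral_ofReal, Complex.betaIntegral]
    refine intervalIntegral.integral_congr fun x hx => ?_
    rw [uIcc_of_le zero_le_one] at hx
    push_cast
    rw [Complex.ofReal_cpow hx.1, Complex.ofReal_cpow (sub_nonneg.2 hx.2)]
    push_cast
    rfl
  rw [beta_eq_betaIntegralReal s t hs ht, hbeta, Complex.ofReal_re]

theorem integral_Ioi_rpow_mul_one_add_rpow_eq_beta {s t : ℝ} (hs : 0 < s) (ht : 0 < t) :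
    ∫ u in Ioi 0, u ^ (s - 1) * (1 + u) ^ (-(s + t)) = beta s t := by
  rw [integral_Ioi_eq_setIntegral_Ioo_div_one_sub,
    ← intervalIntegral_rpow_mul_one_sub_rpow_eq_beta hs ht,
    intervalIntegral.integral_of_le zero_le_one, integral_Ioc_eq_integral_Ioo]
  refine setIntegral_congr_fun measurableSet_Ioo fun y hy ↦ ?_
  have hy0 : 0 < y := hy.1
  have hy1 : 0 < 1 - y := sub_pos.2 hy.2
  have hsum : 1 + y / (1 - y) = (1 - y)⁻¹ := by field_simp; ring
  rw [smul_eq_mul, hsum, div_rpow hy0.le hy1.le, inv_rpow hy1.le, ← rpow_neg hy1.le,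
    ← rpow_natCast, ← rpow_neg hy1.le, div_eq_mul_inv, ← rpow_neg hy1.le, mul_left_comm,
    mul_assoc, ← rpow_add hy1, ← rpow_add hy1]
  congr 2
  push_cast
  ring

theorem intervalIntegral_rpow_mul_one_sub_rpow_rpow_eq_beta {a b n : ℝ} (ha : 0 < a) (hb : 0 < b)
    (hn : 0 < n) :
    ∫ x in (0:ℝ)..1, x ^ (a - 1) * (1 - x ^ n) ^ (b - 1) = beta (a / n) b / n := by
  rw [← intervalIntegral_rpow_mul_one_sub_rpow_eq_beta (div_pos ha hn) hb,
    intervalIntegral.integral_of_le zero_le_one, intervalIntegral.integral_of_le zero_le_one,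
    integral_Ioc_eq_integral_Ioo, integral_Ioc_eq_integral_Ioo,
    setIntegral_Ioo_rpow_mul_comp_rpow a hn fun t => (1 - t) ^ (b - 1), inv_mul_eq_div]

theorem integral_Ioi_rpow_mul_one_add_rpow_rpow_eq_beta {a c n : ℝ} (ha : 0 < a) (hn : 0 < n)
    (hac : a < c * n) :
    ∫ z in Ioi 0, z ^ (a - 1) * (1 + z ^ n) ^ (-c) = beta (a / n) (c - a / n) / n := by
  have hc : a / n < c := (div_lt_iff₀ hn).2 hac
  rw [← integral_Ioi_rpow_mul_one_add_rpow_eq_beta (div_pos ha hn) (sub_pos.2 hc),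
    add_sub_cancel, integral_Ioi_rpow_mul_comp_rpow a hn fun t => (1 + t) ^ (-c), inv_mul_eq_div]

theorem Gamma_one_half_add_mul_Gamma_one_half_sub (s : ℝ) :
    Gamma (1 / 2 + s) * Gamma (1 / 2 - s) = π / cos (π * s) := by
  rw [show 1 / 2 - s = 1 - (1 / 2 + s) by ring, Gamma_mul_Gamma_one_sub,
    show π * (1 / 2 + s) = π * s + π / 2 by ring, sin_add_pi_div_two]

theorem beta_one_half_eq_cos_mul_beta {s : ℝ} (hs : -(1 / 2) < s) (hs' : s < 1 / 2) :
    beta s (1 / 2) = cos (π * s) * beta s (1 / 2 - s) := by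
  have hcos : 0 < cos (π * s) :=
    cos_pos_of_mem_Ioo ⟨by nlinarith [pi_pos], by nlinarith [pi_pos]⟩
  have hreflect := Gamma_one_half_add_mul_Gamma_one_half_sub s
  have hhalf : Gamma (1 / 2) * Gamma (1 / 2) = π := by
    rw [Gamma_one_half_eq, mul_self_sqrt pi_pos.le]
  have hplus := Gamma_pos_of_pos (show (0:ℝ) < 1 / 2 + s by linarith)
  have hhalf_pos := Gamma_pos_of_pos (show (0:ℝ) < 1 / 2 by norm_num)
  rw [eq_div_iff hcos.ne'] at hreflect
  rw [beta, beta, add_comm s, add_sub_cancel, div_eq_iff hplus.ne', mul_div_assoc',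
    div_mul_eq_mul_div, eq_div_iff hhalf_pos.ne']
  linear_combination Gamma s * (hhalf - hreflect)

theorem legendre_z1 (a n : ℝ) (ha : 0 < a) (han : 2 * a < n) :
    ∫ x in (0:ℝ)..1, x ^ (a - 1) * (1 - x ^ n) ^ (-(1:ℝ)/2) =
      Real.cos (a * Real.pi / n) *
        ∫ z in Set.Ioi (0:ℝ), z ^ (a - 1) * (1 + z ^ n) ^ (-(1:ℝ)/2) := by
  have hn : 0 < n := by linarith
  have hleft : ∫ x in (0:ℝ)..1, x ^ (a - 1) * (1 - x ^ n) ^ (-(1:ℝ)/2) =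
      beta (a / n) (1 / 2) / n := by
    rw [show -(1:ℝ)/2 = 1 / 2 - 1 by norm_num]
    exact intervalIntegral_rpow_mul_one_sub_rpow_rpow_eq_beta ha one_half_pos hn
  have hright : ∫ z in Ioi (0:ℝ), z ^ (a - 1) * (1 + z ^ n) ^ (-(1:ℝ)/2) =
      beta (a / n) (1 / 2 - a / n) / n := by
    rw [show -(1:ℝ)/2 = -(1 / 2) by norm_num]
    exact integral_Ioi_rpow_mul_one_add_rpow_rpow_eq_beta ha hn (by linarith)
  have hs : a / n < 1 / 2 := by rw [div_lt_iff₀ hn]; linarith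
  rw [hleft, hright, beta_one_half_eq_cos_mul_beta (by linarith [div_pos ha hn]) hs,
    show a * π / n = π * (a / n) by ring]
  ring
end

section
/- (Goursat cubic reduction, genus 2) The following identity between an elliptic and a hyperelliptic integral holds: ∫_1^∞ dx/√(x(x³ − 1)) = 6 · ∫_1^∞ dt/√((t³ + 2)(t³ + 8)). -/
open MeasureTheory

theorem goursat_reduction_genus2 :
    ∫ x in Set.Ioi (1:ℝ), (Real.sqrt (x * (x ^ 3 - 1)))⁻¹ =
      6 * ∫ t in Set.Ioi (1:ℝ), (Real.sqrt ((t ^ 3 + 2) * (t ^ 3 + 8)))⁻¹ := by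
  set f : ℝ → ℝ := fun t => (t ^ 3 + 2) / (3 * t) with hf_def
  set f' : ℝ → ℝ := fun t => 2 * (t ^ 3 - 1) / (3 * t ^ 2) with hf'_def
  have hderiv : ∀ t ∈ Set.Ioi (1:ℝ), HasDerivWithinAt f (f' t) (Set.Ioi 1) t := by
    intro t ht
    have ht1 : (1:ℝ) < t := ht
    have ht0 : (3 : ℝ) * t ≠ 0 := by positivity
    have h1 : HasDerivAt (fun t : ℝ => t ^ 3 + 2) (3 * t ^ 2) t := by
      simpa using ((hasDerivAt_pow 3 t).add_const 2)
    have h2 : HasDerivAt (fun t : ℝ => 3 * t) 3 t := by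
      simpa using (hasDerivAt_id t).const_mul 3
    have hd := h1.div h2 ht0
    have heq : (3 * t ^ 2 * (3 * t) - (t ^ 3 + 2) * 3) / (3 * t) ^ 2
        = 2 * (t ^ 3 - 1) / (3 * t ^ 2) := by
      rw [div_eq_div_iff (by positivity) (by positivity)]
      ring
    rw [heq] at hd
    exact hd.hasDerivWithinAt
  have hmono : StrictMonoOn f (Set.Ioi (1:ℝ)) := by
    intro a ha b hb hab
    have ha1 : (1:ℝ) < a := ha
    have hb1 : (1:ℝ) < b := hb
    show (a ^ 3 + 2) / (3 * a) < (b ^ 3 + 2) / (3 * b)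
    rw [div_lt_div_iff₀ (by positivity) (by positivity)]
    have hab1 : (1:ℝ) < a * b := by nlinarith [mul_pos (sub_pos.2 ha1) (sub_pos.2 hb1)]
    have h2 : (2:ℝ) < a * b * (a + b) := by
      nlinarith [mul_pos (by linarith : (0:ℝ) < a * b - 1) (by linarith : (0:ℝ) < a + b)]
    nlinarith [mul_pos (sub_pos.2 hab) (by linarith : (0:ℝ) < a * b * (a + b) - 2)]
  have hinj : Set.InjOn f (Set.Ioi (1:ℝ)) := hmono.injOn
  have himg : f '' Set.Ioi (1:ℝ) = Set.Ioi (1:ℝ) := by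
    apply Set.Subset.antisymm
    · rintro _ ⟨t, ht, rfl⟩
      have ht1 : (1:ℝ) < t := ht
      show (1:ℝ) < (t ^ 3 + 2) / (3 * t)
      rw [lt_div_iff₀ (by positivity)]
      nlinarith [mul_pos (mul_pos (sub_pos.2 ht1) (sub_pos.2 ht1))
        (by linarith : (0:ℝ) < t + 2)]
    · have hcont : ContinuousOn f (Set.Ioi (1:ℝ)) := by
        apply ContinuousOn.div
        · fun_prop
        · fun_prop
        · intro t ht
          have : (1:ℝ) < t := ht
          positivity
      have ht1 : Filter.Tendsto f (nhdsWithin 1 (Set.Ioi 1)) (nhds 1) := by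
        have hc : ContinuousAt f 1 := by
          apply ContinuousAt.div
          · fun_prop
          · fun_prop
          · norm_num
        have h : Filter.Tendsto f (nhdsWithin 1 (Set.Ioi 1)) (nhds (f 1)) :=
          hc.continuousWithinAt
        rwa [show f 1 = 1 by norm_num [hf_def]] at h
      have ht2 : Filter.Tendsto f Filter.atTop Filter.atTop := by
        apply Filter.tendsto_atTop_mono' _ (_ : ∀ᶠ t in Filter.atTop, t / 3 ≤ f t)
          (Filter.Tendsto.atTop_div_const (by norm_num) Filter.tendsto_id)
        filter_upwards [Filter.eventually_ge_atTop (1:ℝ)] with t ht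
        show t / 3 ≤ (t ^ 3 + 2) / (3 * t)
        rw [div_le_div_iff₀ (by norm_num) (by positivity)]
        nlinarith [mul_nonneg (mul_nonneg (by linarith : (0:ℝ) ≤ t - 1)
          (by linarith : (0:ℝ) ≤ t)) (by linarith : (0:ℝ) ≤ t)]
      exact (isPreconnected_Ioi (a := (1:ℝ))).intermediate_value_Ioi
        (Filter.le_principal_iff.2 self_mem_nhdsWithin)
        (Filter.le_principal_iff.2 (Filter.Ioi_mem_atTop 1)) hcont ht1 ht2
  have key := MeasureTheory.integral_image_eq_integral_abs_deriv_smul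
    measurableSet_Ioi hderiv hinj (fun x => (Real.sqrt (x * (x ^ 3 - 1)))⁻¹)
  rw [himg] at key
  rw [key, ← MeasureTheory.integral_const_mul]
  apply MeasureTheory.setIntegral_congr_fun measurableSet_Ioi
  intro t ht
  have ht1 : (1:ℝ) < t := ht
  have ht0 : (0:ℝ) < t := by linarith
  have htc : (0:ℝ) < t ^ 3 - 1 := by nlinarith [one_lt_pow₀ ht1 (three_ne_zero)]
  have hA : (0:ℝ) < (t ^ 3 + 2) * (t ^ 3 + 8) := by nlinarith
  have hsA : (0:ℝ) < Real.sqrt ((t ^ 3 + 2) * (t ^ 3 + 8)) := Real.sqrt_pos.2 hA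
  have keyalg : f t * (f t ^ 3 - 1)
      = ((t ^ 3 - 1) / (9 * t ^ 2)) ^ 2 * ((t ^ 3 + 2) * (t ^ 3 + 8)) := by
    show (t ^ 3 + 2) / (3 * t) * (((t ^ 3 + 2) / (3 * t)) ^ 3 - 1) = _
    field_simp
    ring
  have hsq : Real.sqrt (f t * (f t ^ 3 - 1))
      = (t ^ 3 - 1) / (9 * t ^ 2) * Real.sqrt ((t ^ 3 + 2) * (t ^ 3 + 8)) := by
    rw [keyalg, Real.sqrt_mul (sq_nonneg _), Real.sqrt_sq (by positivity)]
  have habs : |f' t| = 2 * (t ^ 3 - 1) / (3 * t ^ 2) :=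
    abs_of_pos (by positivity)
  simp only [smul_eq_mul, hsq, habs]
  rw [mul_inv]
  field_simp
  ring
end

section
/- The lemniscatic evaluation ∫_{−√3}^0 dy/√(y³ − 3y) = (4/3)^{1/4} · K(1/√2) holds, where y³ − 3y > 0 for y ∈ (−√3, 0). -/
open MeasureTheory

/-!
Substitute `y = -a cos² θ` in `∫_{-a}^0 dy / √(y³ - a² y)`, `a > 0`. Since
`y³ - a² y = a³ sin² θ cos² θ (1 + cos² θ)` and `dy = 2 a sin θ cos θ dθ`, the sine and cosine
factors cancel and the integrand becomes `2 / √(a (1 + cos² θ)) = √(2 / a) (1 - sin² θ / 2)^(-1/2)`,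
so the integral is `√(2 / a) K(1/√2)`. For `a = √3` the constant is `√(2 / √3) = (4/3)^(1/4)`.
-/

open Real Set

lemma cubic_pos_of_mem_Ioo {a y : ℝ} (hy : y ∈ Ioo (-a) 0) : 0 < y ^ 3 - a ^ 2 * y := by
  obtain ⟨hay, hy0⟩ := hy
  have hfactor : y ^ 3 - a ^ 2 * y = y * ((y - a) * (y + a)) := by ring
  rw [hfactor]
  exact mul_pos_of_neg_of_neg hy0 (mul_neg_of_neg_of_pos (by linarith) (by linarith))

lemma sqrt_two_div_sqrt_three_eq_rpow : √(2 / √3) = (4 / 3 : ℝ) ^ ((1 : ℝ) / 4) := by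
  calc √(2 / √3) = (2 / √3) ^ ((2 : ℕ) * ((1 : ℝ) / 4)) := by rw [sqrt_eq_rpow]; norm_num
    _ = (4 / 3 : ℝ) ^ ((1 : ℝ) / 4) := by
      rw [rpow_mul (by positivity), rpow_natCast, div_pow, sq_sqrt (by norm_num)]
      norm_num

lemma mul_inv_sqrt_cubic_neg_mul_cos_sq {a θ : ℝ} (ha : 0 < a) (hθ : θ ∈ Ioo 0 (π / 2)) :
    2 * a * (sin θ * cos θ) * (√((-a * cos θ ^ 2) ^ 3 - a ^ 2 * (-a * cos θ ^ 2)))⁻¹ =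
      √(2 / a) * (1 - (1 / √2) ^ 2 * sin θ ^ 2) ^ (-(1 : ℝ) / 2) := by
  have hc : 0 < cos θ := cos_pos_of_mem_Ioo ⟨by linarith [hθ.1, pi_pos], hθ.2⟩
  have hs : 0 < sin θ := sin_pos_of_pos_of_lt_pi hθ.1 (by linarith [hθ.2, pi_pos])
  have hsc : sin θ ^ 2 + cos θ ^ 2 = 1 := sin_sq_add_cos_sq θ
  have hcubic : (-a * cos θ ^ 2) ^ 3 - a ^ 2 * (-a * cos θ ^ 2) =
      (a * (sin θ * cos θ)) ^ 2 * (a * (1 + cos θ ^ 2)) := by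
    linear_combination (-a ^ 3 * cos θ ^ 2 * (1 + cos θ ^ 2)) * hsc
  have hbase : 1 - (1 / √2) ^ 2 * sin θ ^ 2 = (1 + cos θ ^ 2) / 2 := by
    rw [div_pow, sq_sqrt zero_le_two]; linarith
  rw [hcubic, hbase, sqrt_mul (by positivity), sqrt_sq (by positivity),
    show -(1 : ℝ) / 2 = -(1 / 2) by norm_num, rpow_neg (by positivity), ← sqrt_eq_rpow,
    ← sqrt_inv, ← sqrt_mul (by positivity),
    show 2 / a * ((1 + cos θ ^ 2) / 2)⁻¹ = 2 ^ 2 / (a * (1 + cos θ ^ 2)) by field_simp,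
    sqrt_div' _ (by positivity), sqrt_sq zero_le_two]
  field_simp

-- The monotone change of variables needs no integrability, so the improper integral is covered.
theorem integral_inv_sqrt_cubic {a : ℝ} (ha : 0 < a) :
    ∫ y in (-a)..0, (√(y ^ 3 - a ^ 2 * y))⁻¹ = √(2 / a) * ellipticK (1 / √2) := by
  have hsubst := integral_Icc_deriv_smul_of_deriv_nonneg (a := 0) (b := π / 2)
    (f := fun θ => -a * cos θ ^ 2) (f' := fun θ => 2 * a * (sin θ * cos θ))
    (g := fun y => (√(y ^ 3 - a ^ 2 * y))⁻¹) (by fun_prop)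
    (fun θ _ => (((hasDerivAt_cos θ).pow 2).const_mul (-a)).congr_deriv (by ring))
    (fun θ hθ => mul_nonneg (by positivity) <| mul_nonneg
      (sin_nonneg_of_nonneg_of_le_pi hθ.1.le (by linarith [hθ.2, pi_pos]))
      (cos_nonneg_of_mem_Icc ⟨by linarith [hθ.1, pi_pos], hθ.2.le⟩)) (by positivity)
  simp only [cos_zero, cos_pi_div_two, one_pow, mul_one, zero_pow two_ne_zero, mul_zero,
    smul_eq_mul] at hsubst
  rw [intervalIntegral.integral_of_le (by linarith), ← integral_Icc_eq_integral_Ioc, ← hsubst,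
    ellipticK, intervalIntegral.integral_of_le (by positivity), integral_Icc_eq_integral_Ioo,
    integral_Ioc_eq_integral_Ioo, ← integral_const_mul]
  exact setIntegral_congr_fun measurableSet_Ioo
    fun θ hθ => mul_inv_sqrt_cubic_neg_mul_cos_sq ha hθ

theorem lemniscatic_eval :
    (∀ y ∈ Set.Ioo (-Real.sqrt 3) (0:ℝ), 0 < y ^ 3 - 3 * y) ∧
    ∫ y in (-Real.sqrt 3)..(0:ℝ), (Real.sqrt (y ^ 3 - 3 * y))⁻¹ =
      (4/3 : ℝ) ^ ((1:ℝ)/4) * ellipticK (1 / Real.sqrt 2) := by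
  have hsq : √3 ^ 2 = 3 := sq_sqrt (by norm_num)
  constructor
  · intro y hy
    simpa only [hsq] using cubic_pos_of_mem_Ioo hy
  · have key := integral_inv_sqrt_cubic (a := √3) (by positivity)
    rwa [hsq, sqrt_two_div_sqrt_three_eq_rpow] at key
end
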